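/- arXiv:2111.12978 — 2 statements merged into one kernel-verified Lean document; each statement's English description precedes it below -/
import Mathlib

section
/- Given a finite signature, the proof system L_PAKC (extending L_KC with necessitation for interventions, the announcement reduction axioms !_=, !_¬, !_∧, !_K, !_!, K_!, necessitation for announcements, replacement of provable equivalents inside announcements, and the commutation axiom =_!) is sound and strongly complete for the language L_PAKC with respect to epistemic recursive causal models: for every set Γ ∪ {χ} of L_PAKC formulas, Γ proves χ in L_PAKC if and only if every pointed epistemic causal model satisfying all formulas of Γ satisfies χ. -/
open Classical

/-- A finite signature: variables sorted into exogenous and endogenous, each with a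
finite nonempty range of values. -/
structure Sig : Type 1 where
  Var : Type
  exo : Var → Prop
  Val : Var → Type
  [decEqVar : DecidableEq Var]
  [finVar : Fintype Var]
  [neVar : Nonempty Var]
  [decEqVal : ∀ X : Var, DecidableEq (Val X)]
  [finVal : ∀ X : Var, Fintype (Val X)]
  [neVal : ∀ X : Var, Nonempty (Val X)]

attribute [instance] Sig.decEqVar Sig.finVar Sig.neVar Sig.decEqVal Sig.finVal Sig.neVal

variable {S : Sig}

/-- A valuation: a value for each variable. -/
abbrev Env (S : Sig) : Type := ∀ X : S.Var, S.Val X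

instance : Nonempty (Env S) := ⟨fun X => Classical.arbitrary (S.Val X)⟩

/-- Values for all variables other than `V`. -/
abbrev Others (S : Sig) (V : S.Var) : Type := ∀ X : {X : S.Var // X ≠ V}, S.Val X.val

/-- The restriction of a valuation to the variables other than `V`. -/
def Env.restrict (A : Env S) (V : S.Var) : Others S V := fun X => A X.val

/-- A family of structural functions (only the components at endogenous variables
are meaningful). -/
abbrev StructFuns (S : Sig) : Type := ∀ V : S.Var, Others S V → S.Val V

/-- A valuation complies with the structural functions: the value of each endogenous
variable is obtained by applying its structural function to the values of all
other variables. -/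
def Complies (F : StructFuns S) (A : Env S) : Prop :=
  ∀ V : S.Var, ¬ S.exo V → A V = F V (A.restrict V)

/-- The endogenous variable `V` is directly causally affected by `X` under `F`. -/
def DirAff (F : StructFuns S) (X V : S.Var) : Prop :=
  ¬ S.exo V ∧ ∃ (h : X ≠ V) (g : Others S V) (x₁ x₂ : S.Val X),
    x₁ ≠ x₂ ∧
      F V (Function.update g ⟨X, h⟩ x₁) ≠ F V (Function.update g ⟨X, h⟩ x₂)

/-- `F` is recursive: the transitive closure of the direct causal dependence
relation is asymmetric (transitivity is automatic for `Relation.TransGen`). -/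
def RecursiveF (F : StructFuns S) : Prop :=
  ∀ a b : S.Var, Relation.TransGen (DirAff F) a b → ¬ Relation.TransGen (DirAff F) b a

/-- An assignment of values to a set of pairwise distinct variables. -/
abbrev Intervention (S : Sig) : Type := ∀ X : S.Var, Option (S.Val X)

/-- The empty assignment. -/
def iEmpty (S : Sig) : Intervention S := fun _ => none

/-- Extend an assignment by additionally setting `Y` to `y` (overriding). -/
def iUpd (I : Intervention S) (Y : S.Var) (y : S.Val Y) : Intervention S :=
  Function.update I Y (some y)

/-- Combine assignments, the second overriding the first:  `[X⃗ := x⃗, Y⃗ := y⃗]`. -/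
def icomp (I J : Intervention S) : Intervention S := fun W =>
  match J W with
  | some v => some v
  | none => I W

/-- The intervened family of structural functions: intervened variables get the
constant function returning the assigned value; the rest are unchanged. -/
def intF (F : StructFuns S) (I : Intervention S) : StructFuns S :=
  fun V g => (I V).getD (F V g)

/-- `A'` is the result of intervening with `I` on the valuation `A` (w.r.t. `F`):
exogenous intervened variables get the assigned value, exogenous non-intervened
variables keep their value, and each endogenous variable complies with its new
structural function. -/
def IntervenedVal (F : StructFuns S) (A : Env S) (I : Intervention S) (A' : Env S) : Prop :=
  (∀ X : S.Var, S.exo X → ∀ v : S.Val X, I X = some v → A' X = v) ∧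
  (∀ X : S.Var, S.exo X → I X = none → A' X = A X) ∧
  (∀ V : S.Var, ¬ S.exo V → A' V = intF F I V (A'.restrict V))

/-- The intervened valuation (unique when `F` is recursive). -/
noncomputable def intVal (F : StructFuns S) (A : Env S) (I : Intervention S) : Env S :=
  Classical.epsilon (IntervenedVal F A I)

/-- The language L_PAKC: atoms `Y = y`, negation, conjunction, knowledge,
public announcements, and interventionist counterfactual operators. -/
inductive Form (S : Sig) : Type where
  | eq (Y : S.Var) (y : S.Val Y) : Form S
  | neg (φ : Form S) : Form S
  | conj (φ ψ : Form S) : Form S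
  | know (φ : Form S) : Form S
  | ann (α φ : Form S) : Form S
  | int (I : Intervention S) (φ : Form S) : Form S

namespace Form

/-- Material implication, defined from `¬` and `∧` as usual. -/
def impl (φ ψ : Form S) : Form S := Form.neg (Form.conj φ (Form.neg ψ))

/-- Disjunction, defined from `¬` and `∧` as usual. -/
def orF (φ ψ : Form S) : Form S := Form.neg (Form.conj (Form.neg φ) (Form.neg ψ))

/-- Biconditional. -/
def iffF (φ ψ : Form S) : Form S := Form.conj (impl φ ψ) (impl ψ φ)

end Form

/-- A canonical contradiction. -/
noncomputable def botF (S : Sig) : Form S :=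
  let X : S.Var := Classical.arbitrary S.Var
  let x : S.Val X := Classical.arbitrary (S.Val X)
  Form.conj (Form.eq X x) (Form.neg (Form.eq X x))

/-- A canonical tautology. -/
noncomputable def topF (S : Sig) : Form S := Form.neg (botF S)

/-- Disjunction of a list of formulas (the empty disjunction is a contradiction). -/
noncomputable def bigOr : List (Form S) → Form S
  | [] => botF S
  | φ :: l => l.foldl Form.orF φ

/-- Conjunction of a list of formulas (the empty conjunction is a tautology). -/
noncomputable def bigConj : List (Form S) → Form S
  | [] => topF S
  | φ :: l => l.foldl Form.conj φ

/-- `φ` is an instance of a propositional tautology: it evaluates to `true` under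
every Boolean valuation that respects negation and conjunction (treating all
other formulas as atoms). -/
def Tauto (φ : Form S) : Prop :=
  ∀ v : Form S → Bool,
    (∀ ψ : Form S, v (Form.neg ψ) = !(v ψ)) →
    (∀ ψ χ : Form S, v (Form.conj ψ χ) = (v ψ && v χ)) →
    v φ = true

/-- The assignment `[Z⃗ := z⃗, X := x]` where `Z⃗` lists all variables other than
`X` and `V`, used in the formula `X ⇝ V`. -/
def ltInt (X V : S.Var) (g : ∀ W : {W : S.Var // W ≠ X ∧ W ≠ V}, S.Val W.val)
    (x : S.Val X) : Intervention S := fun W =>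
  if h : W = X then some (h.symm ▸ x)
  else if h' : W = V then none
  else some (g ⟨W, ⟨h, h'⟩⟩)

/-- The formula `X ⇝ V`: the disjunction, over tuples `z⃗` of values for all
variables other than `X` and `V`, distinct values `x₁ ≠ x₂` of `X` and distinct
values `v₁ ≠ v₂` of `V`, of `[Z⃗:=z⃗, X:=x₁]V=v₁ ∧ [Z⃗:=z⃗, X:=x₂]V=v₂`. -/
noncomputable def leadsTo (X V : S.Var) : Form S :=
  bigOr ((Finset.univ.filter
      (fun p : (∀ W : {W : S.Var // W ≠ X ∧ W ≠ V}, S.Val W.val) ×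
          (S.Val X × S.Val X) × (S.Val V × S.Val V) =>
        p.2.1.1 ≠ p.2.1.2 ∧ p.2.2.1 ≠ p.2.2.2)).toList.map
    (fun p =>
      Form.conj
        (Form.int (ltInt X V p.1 p.2.1.1) (Form.eq V p.2.2.1))
        (Form.int (ltInt X V p.1 p.2.1.2) (Form.eq V p.2.2.2))))

/-- The chain `X₀ ⇝ X₁ ∧ ⋯ ∧ X_k ⇝ X_{k+1}`. -/
noncomputable def chainConj (X : ℕ → S.Var) : ℕ → Form S
  | 0 => leadsTo (X 0) (X 1)
  | n + 1 => Form.conj (chainConj X n) (leadsTo (X (n + 1)) (X (n + 2)))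

/-- `ψ₁ → (ψ₂ → ⋯ → (ψₙ → φ))` for a list of premises. -/
def impsFrom : List (Form S) → Form S → Form S
  | [], φ => φ
  | ψ :: l, φ => Form.impl ψ (impsFrom l φ)

/-- Satisfaction of an L_PAKC formula at a pointed epistemic causal model
`(⟨F, T⟩, A)` (the semantics `⊨ᵂ`, without observables). -/
def SatW : Form S → StructFuns S → Set (Env S) → Env S → Prop
  | Form.eq Y y, _, _, A => A Y = y
  | Form.neg φ, F, T, A => ¬ SatW φ F T A
  | Form.conj φ ψ, F, T, A => SatW φ F T A ∧ SatW ψ F T A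
  | Form.know φ, F, T, _ => ∀ B ∈ T, SatW φ F T B
  | Form.ann α φ, F, T, A =>
      SatW α F T A → SatW φ F {B | B ∈ T ∧ SatW α F T B} A
  | Form.int I φ, F, T, A =>
      SatW φ (intF F I) ((fun B => intVal F B I) '' T) (intVal F A I)

/-- The proof system L_PAKC: the system L_KC extended with necessitation for
interventions, the announcement reduction axioms and rules, and the commutation
axiom (=_!). -/
inductive ThmPAKC : Form S → Prop where
  | taut : ∀ {φ : Form S}, Tauto φ → ThmPAKC φ
  | mp : ∀ {φ ψ : Form S}, ThmPAKC (Form.impl φ ψ) → ThmPAKC φ → ThmPAKC ψ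
  | a1 : ∀ (I : Intervention S) (Y : S.Var) (y y' : S.Val Y), y ≠ y' →
      ThmPAKC (Form.impl (Form.int I (Form.eq Y y)) (Form.neg (Form.int I (Form.eq Y y'))))
  | a2 : ∀ (I : Intervention S) (Y : S.Var),
      ThmPAKC (bigOr (((Finset.univ : Finset (S.Val Y)).toList).map
        (fun y => Form.int I (Form.eq Y y))))
  | a3 : ∀ (I : Intervention S) (Y Z : S.Var) (y : S.Val Y) (z : S.Val Z),
      ThmPAKC (Form.impl (Form.conj (Form.int I (Form.eq Y y)) (Form.int I (Form.eq Z z)))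
        (Form.int (iUpd I Y y) (Form.eq Z z)))
  | a4 : ∀ (I : Intervention S) (Y : S.Var) (y : S.Val Y),
      ThmPAKC (Form.int (iUpd I Y y) (Form.eq Y y))
  | a5 : ∀ (I : Intervention S) (Y Z : S.Var) (y : S.Val Y) (z : S.Val Z), Y ≠ Z →
      ThmPAKC (Form.impl
        (Form.conj (Form.int (iUpd I Y y) (Form.eq Z z)) (Form.int (iUpd I Z z) (Form.eq Y y)))
        (Form.int I (Form.eq Z z)))
  | a6 : ∀ (X : ℕ → S.Var) (k : ℕ),
      (∀ i : ℕ, i ≤ k → X i ≠ X (i + 1)) → X (k + 1) ≠ X 0 →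
      ThmPAKC (Form.impl (chainConj X k) (Form.neg (leadsTo (X (k + 1)) (X 0))))
  | a7 : ∀ (I : Intervention S) (U : S.Var) (u : S.Val U), S.exo U → I U = none →
      ThmPAKC (Form.iffF (Form.int (iEmpty S) (Form.eq U u)) (Form.int I (Form.eq U u)))
  | aEmpty : ∀ (Y : S.Var) (y : S.Val Y),
      ThmPAKC (Form.iffF (Form.eq Y y) (Form.int (iEmpty S) (Form.eq Y y)))
  | aNeg : ∀ (I : Intervention S) (φ : Form S),
      ThmPAKC (Form.iffF (Form.int I (Form.neg φ)) (Form.neg (Form.int I φ)))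
  | aConj : ∀ (I : Intervention S) (φ ψ : Form S),
      ThmPAKC (Form.iffF (Form.int I (Form.conj φ ψ))
        (Form.conj (Form.int I φ) (Form.int I ψ)))
  | aIntInt : ∀ (I J : Intervention S) (φ : Form S),
      ThmPAKC (Form.iffF (Form.int I (Form.int J φ)) (Form.int (icomp I J) φ))
  | axK : ∀ (φ ψ : Form S),
      ThmPAKC (Form.impl (Form.know (Form.impl φ ψ))
        (Form.impl (Form.know φ) (Form.know ψ)))
  | necK : ∀ {φ : Form S}, ThmPAKC φ → ThmPAKC (Form.know φ)
  | axT : ∀ (φ : Form S), ThmPAKC (Form.impl (Form.know φ) φ)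
  | ax4 : ∀ (φ : Form S), ThmPAKC (Form.impl (Form.know φ) (Form.know (Form.know φ)))
  | ax5 : ∀ (φ : Form S),
      ThmPAKC (Form.impl (Form.neg (Form.know φ)) (Form.know (Form.neg (Form.know φ))))
  | cm : ∀ (I : Intervention S) (φ : Form S),
      ThmPAKC (Form.iffF (Form.int I (Form.know φ)) (Form.know (Form.int I φ)))
  | kl : ∀ (I : Intervention S) (Y : S.Var) (y : S.Val Y), ¬ S.exo Y →
      (∀ W : S.Var, (I W).isSome ↔ W ≠ Y) →
      ThmPAKC (Form.impl (Form.int I (Form.eq Y y))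
        (Form.know (Form.int I (Form.eq Y y))))
  | necInt : ∀ {φ : Form S} (I : Intervention S), ThmPAKC φ → ThmPAKC (Form.int I φ)
  | annEq : ∀ (α : Form S) (I : Intervention S) (Y : S.Var) (y : S.Val Y),
      ThmPAKC (Form.iffF (Form.ann α (Form.int I (Form.eq Y y)))
        (Form.impl α (Form.int I (Form.eq Y y))))
  | annNeg : ∀ (α φ : Form S),
      ThmPAKC (Form.iffF (Form.ann α (Form.neg φ))
        (Form.impl α (Form.neg (Form.ann α φ))))
  | annConj : ∀ (α φ ψ : Form S),
      ThmPAKC (Form.iffF (Form.ann α (Form.conj φ ψ))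
        (Form.conj (Form.ann α φ) (Form.ann α ψ)))
  | annKnow : ∀ (α φ : Form S),
      ThmPAKC (Form.iffF (Form.ann α (Form.know φ))
        (Form.impl α (Form.know (Form.impl α (Form.ann α φ)))))
  | annAnn : ∀ (α β φ : Form S),
      ThmPAKC (Form.iffF (Form.ann α (Form.ann β φ))
        (Form.ann (Form.conj α (Form.ann α β)) φ))
  | kAnn : ∀ (α φ ψ : Form S),
      ThmPAKC (Form.impl (Form.ann α (Form.impl φ ψ))
        (Form.impl (Form.ann α φ) (Form.ann α ψ)))
  | necAnn : ∀ {φ : Form S} (α : Form S), ThmPAKC φ → ThmPAKC (Form.ann α φ)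
  | reAnn : ∀ {α β : Form S} (φ : Form S), ThmPAKC (Form.iffF α β) →
      ThmPAKC (Form.iffF (Form.ann α φ) (Form.ann β φ))
  | intAnn : ∀ (I : Intervention S) (α φ : Form S),
      ThmPAKC (Form.iffF (Form.int I (Form.ann α φ))
        (Form.ann (Form.int I α) (Form.int I φ)))

/-- Strong derivability from a set of premises in L_PAKC. -/
def ProvPAKC (Γ : Set (Form S)) (φ : Form S) : Prop :=
  ∃ l : List (Form S), (∀ ψ ∈ l, ψ ∈ Γ) ∧ ThmPAKC (impsFrom l φ)

/-! Soundness is an induction on derivations. The interventionist axioms rest on the fact that a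
recursive family of structural functions has exactly one solution under any intervention, and A6
on the observation that a true `X ⇝ V` witnesses a direct dependence of `V` on `X`.

For completeness, the reduction axioms push announcements and interventions inward, so every
formula is provably equivalent to a *basic* one, built from atoms `[X⃗:=x⃗]Y=y` with `¬`, `∧`
and `K`. A maximal consistent set `D₀` then yields a canonical model: its worlds are the maximal
consistent sets with the same `K`-formulas as `D₀`, a world `D` has the valuation that reads
`Y` off `[]Y=y ∈ D`, and `F_V g` is the `y` with `[Z⃗:=g]V=y ∈ D₀`, where `Z⃗` lists all
variables but `V`. KL makes `F_V` the same from every world, A6 makes it recursive, and A3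
shows that the intervened valuation of `D` under `I` reads `Y` off `[I]Y=y ∈ D`, which is the
truth lemma for the atoms. -/

section StructuralEquations

lemma apply_eq_of_update_invariant {ι γ : Type*} [DecidableEq ι] {β : ι → Type*}
    {f : (∀ i, β i) → γ} (s : Finset ι)
    (hs : ∀ i ∈ s, ∀ g x, f (Function.update g i x) = f g) {g₁ g₂ : ∀ i, β i}
    (h : ∀ i ∉ s, g₁ i = g₂ i) : f g₁ = f g₂ := by
  induction s using Finset.induction_on generalizing g₁ with
  | empty => exact congrArg f (funext fun i => h i (Finset.notMem_empty i))
  | insert a s ha ih =>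
    rw [← hs a (Finset.mem_insert_self a s) g₁ (g₂ a)]
    refine ih (fun i hi => hs i (Finset.mem_insert_of_mem hi)) fun i hi => ?_
    by_cases hia : i = a
    · subst hia
      exact Function.update_self ..
    · rw [Function.update_of_ne hia]
      exact h i (by simp [hia, hi])

variable {F : StructFuns S}

lemma apply_update_of_not_dirAff {V : S.Var} (hV : ¬ S.exo V) {w : {X : S.Var // X ≠ V}}
    (h : ¬ DirAff F w V) (g : Others S V) (x : S.Val w) :
    F V (Function.update g w x) = F V g := by
  by_contra hne
  refine h ⟨hV, w.prop, g, x, g w, fun hx => hne ?_, ?_⟩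
  · rw [hx, Function.update_eq_self]
  · rwa [Function.update_eq_self]

lemma apply_eq_of_agree_on_dirAff {V : S.Var} (hV : ¬ S.exo V) {g₁ g₂ : Others S V}
    (h : ∀ w : {X : S.Var // X ≠ V}, DirAff F w V → g₁ w = g₂ w) : F V g₁ = F V g₂ :=
  apply_eq_of_update_invariant (f := F V)
    (Finset.univ.filter fun w : {X : S.Var // X ≠ V} => ¬ DirAff F w V)
    (fun _ hw => apply_update_of_not_dirAff hV (Finset.mem_filter.1 hw).2)
    (fun w hw => h w (by simpa using hw))

lemma DirAff.ne {X V : S.Var} (h : DirAff F X V) : X ≠ V :=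
  h.2.1

lemma DirAff.of_intF {I : Intervention S} {X V : S.Var} (h : DirAff (intF F I) X V) :
    DirAff F X V := by
  obtain ⟨hV, hXV, g, x₁, x₂, hx, hne⟩ := h
  cases hIV : I V with
  | some v => simp [intF, hIV] at hne
  | none => exact ⟨hV, hXV, g, x₁, x₂, hx, by simpa [intF, hIV] using hne⟩

lemma recursiveF_intF (hF : RecursiveF F) (I : Intervention S) : RecursiveF (intF F I) :=
  fun a b hab hba => hF a b (Relation.TransGen.mono (fun _ _ => DirAff.of_intF) _ _ hab)
    (Relation.TransGen.mono (fun _ _ => DirAff.of_intF) _ _ hba)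

lemma RecursiveF.wellFounded (hF : RecursiveF F) : WellFounded (DirAff F) :=
  have : Std.Irrefl (Relation.TransGen (DirAff F)) := ⟨fun a h => hF a a h h⟩
  Subrelation.wf Relation.TransGen.single (Finite.wellFounded_of_trans_of_irrefl _)

lemma intervenedVal_iff {A C : Env S} {I : Intervention S} :
    IntervenedVal F A I C ↔
      ∀ X, C X = (I X).getD (if S.exo X then A X else F X (C.restrict X)) := by
  constructor
  · rintro ⟨hsome, hnone, hendo⟩ X
    by_cases hX : S.exo X
    · cases hI : I X with
      | none => simpa [hX, hI] using hnone X hX hI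
      | some v => simpa [hX, hI] using hsome X hX v hI
    · simpa [hX, intF] using hendo X hX
  · intro h
    exact ⟨fun X hX v hv => by simpa [hX, hv] using h X, fun X hX hv => by simpa [hX, hv] using h X,
      fun V hV => by simpa [hV, intF] using h V⟩

lemma RecursiveF.exists_intervenedVal (hF : RecursiveF F) (A : Env S) (I : Intervention S) :
    ∃ C, IntervenedVal F A I C := by
  let step : ∀ V : S.Var, (∀ X, DirAff F X V → S.Val X) → S.Val V := fun V rec =>
    (I V).getD (if S.exo V then A V else
      F V fun w => if h : DirAff F w V then rec w h else Classical.arbitrary _)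
  let C : Env S := hF.wellFounded.fix step
  refine ⟨C, intervenedVal_iff.2 fun V => ?_⟩
  rw [show C V = step V (fun X _ => C X) from hF.wellFounded.fix_eq step V]
  by_cases hV : S.exo V
  · simp [step, hV]
  · simp only [step, hV, if_false]
    congr 1
    exact apply_eq_of_agree_on_dirAff hV fun w hw => by simp [hw, Env.restrict, C]

lemma RecursiveF.intervenedVal_unique (hF : RecursiveF F) {A C₁ C₂ : Env S} {I : Intervention S}
    (h₁ : IntervenedVal F A I C₁) (h₂ : IntervenedVal F A I C₂) : C₁ = C₂ := by
  funext V
  induction V using hF.wellFounded.induction with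
  | _ V ih =>
    rw [intervenedVal_iff.1 h₁ V, intervenedVal_iff.1 h₂ V]
    by_cases hV : S.exo V
    · simp [hV]
    · simp only [hV, if_false]
      congr 1
      exact apply_eq_of_agree_on_dirAff hV fun w hw => ih w hw

end StructuralEquations

section Interventions

variable {F : StructFuns S}

namespace RecursiveF

variable (hF : RecursiveF F)
include hF

lemma intervenedVal_intVal (A : Env S) (I : Intervention S) :
    IntervenedVal F A I (intVal F A I) :=
  Classical.epsilon_spec (hF.exists_intervenedVal A I)

lemma intVal_eq {A C : Env S} {I : Intervention S} (h : IntervenedVal F A I C) :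
    intVal F A I = C :=
  hF.intervenedVal_unique (hF.intervenedVal_intVal A I) h

lemma intVal_apply (A : Env S) (I : Intervention S) (X : S.Var) :
    intVal F A I X =
      (I X).getD (if S.exo X then A X else F X ((intVal F A I).restrict X)) :=
  intervenedVal_iff.1 (hF.intervenedVal_intVal A I) X

lemma complies_intVal (A : Env S) (I : Intervention S) :
    Complies (intF F I) (intVal F A I) :=
  (hF.intervenedVal_intVal A I).2.2

lemma intVal_apply_of_some (A : Env S) {I : Intervention S} {X : S.Var} {x : S.Val X}
    (h : I X = some x) : intVal F A I X = x := by
  rw [hF.intVal_apply, h, Option.getD_some]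

lemma intVal_apply_of_exo (A : Env S) {I : Intervention S} {X : S.Var} (hX : S.exo X)
    (h : I X = none) : intVal F A I X = A X := by
  rw [hF.intVal_apply, h, Option.getD_none, if_pos hX]

lemma intVal_iEmpty {A : Env S} (hA : Complies F A) : intVal F A (iEmpty S) = A :=
  hF.intVal_eq <| intervenedVal_iff.2 fun X => by
    by_cases hX : S.exo X <;> simp [iEmpty, hX, hA X]

lemma intVal_congr_of_exo_isSome {I : Intervention S} (h : ∀ X, S.exo X → (I X).isSome)
    (A B : Env S) : intVal F A I = intVal F B I :=
  hF.intVal_eq <| intervenedVal_iff.2 fun X => by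
    conv_lhs => rw [hF.intVal_apply]
    by_cases hX : S.exo X
    · obtain ⟨x, hx⟩ := Option.isSome_iff_exists.1 (h X hX)
      simp [hx]
    · simp [hX]

end RecursiveF

lemma iUpd_self (I : Intervention S) (Y : S.Var) (y : S.Val Y) : iUpd I Y y Y = some y :=
  Function.update_self ..

lemma iUpd_of_ne (I : Intervention S) {X Y : S.Var} (h : X ≠ Y) (y : S.Val Y) :
    iUpd I Y y X = I X :=
  Function.update_of_ne h ..

lemma iUpd_comm (I : Intervention S) {Y Z : S.Var} (h : Y ≠ Z) (y : S.Val Y) (z : S.Val Z) :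
    iUpd (iUpd I Y y) Z z = iUpd (iUpd I Z z) Y y :=
  Function.update_comm h ..

lemma intF_iEmpty (F : StructFuns S) : intF F (iEmpty S) = F :=
  rfl

lemma intF_icomp (F : StructFuns S) (I J : Intervention S) :
    intF (intF F I) J = intF F (icomp I J) := by
  funext V g
  cases hJ : J V <;> simp [intF, icomp, hJ]

namespace RecursiveF

variable (hF : RecursiveF F)
include hF

lemma intVal_iUpd_of_eq {A : Env S} {I : Intervention S} {Y : S.Var} {y : S.Val Y}
    (h : intVal F A I Y = y) : intVal F A (iUpd I Y y) = intVal F A I :=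
  hF.intVal_eq <| intervenedVal_iff.2 fun X => by
    rcases eq_or_ne X Y with rfl | hXY
    · rw [iUpd_self, Option.getD_some, h]
    · rw [iUpd_of_ne I hXY]
      exact hF.intVal_apply A I X

lemma intVal_eq_intVal_iUpd_of_reversible {A : Env S} {I : Intervention S} {Y Z : S.Var}
    (hYZ : Y ≠ Z) {y : S.Val Y} {z : S.Val Z} (hz : intVal F A (iUpd I Y y) Z = z)
    (hy : intVal F A (iUpd I Z z) Y = y) : intVal F A I = intVal F A (iUpd I Y y) := by
  have hsame : intVal F A (iUpd I Y y) = intVal F A (iUpd I Z z) := by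
    rw [← hF.intVal_iUpd_of_eq hz, ← hF.intVal_iUpd_of_eq hy, iUpd_comm I hYZ]
  refine hF.intVal_eq <| intervenedVal_iff.2 fun X => ?_
  rcases eq_or_ne X Y with rfl | hXY
  · have := hF.intVal_apply A (iUpd I Z z) X
    rwa [iUpd_of_ne I hYZ, ← hsame] at this
  · have := hF.intVal_apply A (iUpd I Y y) X
    rwa [iUpd_of_ne I hXY] at this

lemma intVal_icomp (A : Env S) (I J : Intervention S) :
    intVal F A (icomp I J) = intVal (intF F I) (intVal F A I) J :=
  hF.intVal_eq <| intervenedVal_iff.2 fun X => by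
    rw [(recursiveF_intF hF I).intVal_apply]
    by_cases hX : S.exo X
    · rw [hF.intVal_apply A I X]
      cases hJ : J X <;> simp [icomp, hJ, hX]
    · cases hJ : J X <;> simp [icomp, intF, hJ, hX]

lemma image_intVal_icomp (I J : Intervention S) (T : Set (Env S)) :
    (fun B => intVal (intF F I) B J) '' ((fun B => intVal F B I) '' T) =
      (fun B => intVal F B (icomp I J)) '' T := by
  rw [Set.image_image]
  exact Set.image_congr fun B _ => (hF.intVal_icomp B I J).symm

end RecursiveF

end Interventions

section BooleanValuations

structure IsBoolVal (v : Form S → Bool) : Prop where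
  neg : ∀ φ, v (Form.neg φ) = !(v φ)
  conj : ∀ φ ψ, v (Form.conj φ ψ) = (v φ && v ψ)

lemma tauto_iff {φ : Form S} : Tauto φ ↔ ∀ v, IsBoolVal v → v φ = true :=
  ⟨fun h v hv => h v hv.neg hv.conj, fun h v hn hc => h v ⟨hn, hc⟩⟩

namespace IsBoolVal

variable {v : Form S → Bool} (hv : IsBoolVal v)
include hv

lemma neg_eq_true (φ : Form S) : v (Form.neg φ) = true ↔ ¬ v φ = true := by
  simp [hv.neg]

lemma conj_eq_true (φ ψ : Form S) :
    v (Form.conj φ ψ) = true ↔ v φ = true ∧ v ψ = true := by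
  simp [hv.conj]

lemma impl_eq_true (φ ψ : Form S) :
    v (Form.impl φ ψ) = true ↔ (v φ = true → v ψ = true) := by
  simp only [Form.impl, hv.neg_eq_true, hv.conj_eq_true]
  tauto

lemma orF_eq_true (φ ψ : Form S) : v (Form.orF φ ψ) = true ↔ v φ = true ∨ v ψ = true := by
  simp only [Form.orF, hv.neg_eq_true, hv.conj_eq_true]
  tauto

lemma iffF_eq_true (φ ψ : Form S) :
    v (Form.iffF φ ψ) = true ↔ (v φ = true ↔ v ψ = true) := by
  simp only [Form.iffF, hv.conj_eq_true, hv.impl_eq_true]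
  tauto

lemma botF_ne_true : ¬ v (botF S) = true := by
  simp only [botF, hv.conj_eq_true, hv.neg_eq_true]
  tauto

lemma foldl_orF_eq_true (l : List (Form S)) (φ : Form S) :
    v (l.foldl Form.orF φ) = true ↔ v φ = true ∨ ∃ ψ ∈ l, v ψ = true := by
  induction l generalizing φ with
  | nil => simp
  | cons ψ l ih => simp [ih, hv.orF_eq_true, or_assoc]

lemma bigOr_eq_true (l : List (Form S)) : v (bigOr l) = true ↔ ∃ ψ ∈ l, v ψ = true := by
  cases l with
  | nil => simpa [bigOr] using hv.botF_ne_true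
  | cons φ l => simp [bigOr, hv.foldl_orF_eq_true]

lemma impsFrom_eq_true (l : List (Form S)) (φ : Form S) :
    v (impsFrom l φ) = true ↔ ((∀ ψ ∈ l, v ψ = true) → v φ = true) := by
  induction l with
  | nil => simp [impsFrom]
  | cons ψ l ih => simp [impsFrom, hv.impl_eq_true, ih]

lemma chainConj_eq_true (X : ℕ → S.Var) (k : ℕ) :
    v (chainConj X k) = true ↔ ∀ i ≤ k, v (leadsTo (X i) (X (i + 1))) = true := by
  induction k with
  | zero => simp [chainConj]
  | succ k ih =>
    simp only [chainConj, hv.conj_eq_true, ih]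
    constructor
    · rintro ⟨h, hk⟩ i hi
      rcases Nat.le_succ_iff.1 hi with hi | rfl
      exacts [h i hi, hk]
    · exact fun h => ⟨fun i hi => h i (hi.trans k.le_succ), h _ le_rfl⟩

lemma leadsTo_eq_true (X V : S.Var) :
    v (leadsTo X V) = true ↔
      ∃ g x₁ x₂ y₁ y₂, (x₁ ≠ x₂ ∧ y₁ ≠ y₂) ∧
        v (Form.int (ltInt X V g x₁) (Form.eq V y₁)) = true ∧
        v (Form.int (ltInt X V g x₂) (Form.eq V y₂)) = true := by
  simp only [leadsTo, hv.bigOr_eq_true, List.mem_map, Finset.mem_toList, Finset.mem_filter,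
    Finset.mem_univ, true_and, Prod.exists]
  constructor
  · rintro ⟨_, ⟨g, x₁, x₂, y₁, y₂, hne, rfl⟩, h⟩
    exact ⟨g, x₁, x₂, y₁, y₂, hne, (hv.conj_eq_true _ _).1 h⟩
  · rintro ⟨g, x₁, x₂, y₁, y₂, hne, h⟩
    exact ⟨_, ⟨g, x₁, x₂, y₁, y₂, hne, rfl⟩, (hv.conj_eq_true _ _).2 h⟩

end IsBoolVal

end BooleanValuations

section Satisfaction

variable {F : StructFuns S} {T : Set (Env S)} {A : Env S}

lemma isBoolVal_satW (F : StructFuns S) (T : Set (Env S)) (A : Env S) :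
    IsBoolVal fun φ => decide (SatW φ F T A) :=
  ⟨fun φ => by by_cases h : SatW φ F T A <;> simp [SatW, h],
    fun φ ψ => by by_cases h : SatW φ F T A <;> simp [SatW, h]⟩

lemma satW_of_tauto {φ : Form S} (h : Tauto φ) : SatW φ F T A := by
  simpa using tauto_iff.1 h _ (isBoolVal_satW F T A)

lemma satW_impl {φ ψ : Form S} :
    SatW (Form.impl φ ψ) F T A ↔ (SatW φ F T A → SatW ψ F T A) := by
  simpa using (isBoolVal_satW F T A).impl_eq_true φ ψ

lemma satW_iffF {φ ψ : Form S} :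
    SatW (Form.iffF φ ψ) F T A ↔ (SatW φ F T A ↔ SatW ψ F T A) := by
  simpa using (isBoolVal_satW F T A).iffF_eq_true φ ψ

lemma satW_bigOr {l : List (Form S)} : SatW (bigOr l) F T A ↔ ∃ φ ∈ l, SatW φ F T A := by
  simpa using (isBoolVal_satW F T A).bigOr_eq_true l

lemma satW_impsFrom {l : List (Form S)} {φ : Form S} :
    SatW (impsFrom l φ) F T A ↔ ((∀ ψ ∈ l, SatW ψ F T A) → SatW φ F T A) := by
  simpa using (isBoolVal_satW F T A).impsFrom_eq_true l φ

lemma satW_chainConj {X : ℕ → S.Var} {k : ℕ} :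
    SatW (chainConj X k) F T A ↔ ∀ i ≤ k, SatW (leadsTo (X i) (X (i + 1))) F T A := by
  simpa using (isBoolVal_satW F T A).chainConj_eq_true X k

lemma satW_leadsTo {X V : S.Var} :
    SatW (leadsTo X V) F T A ↔
      ∃ g x₁ x₂, x₁ ≠ x₂ ∧ intVal F A (ltInt X V g x₁) V ≠ intVal F A (ltInt X V g x₂) V := by
  have := (isBoolVal_satW F T A).leadsTo_eq_true X V
  simp only [decide_eq_true_iff] at this
  rw [this]
  constructor
  · rintro ⟨g, x₁, x₂, y₁, y₂, ⟨hx, hy⟩, h₁, h₂⟩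
    exact ⟨g, x₁, x₂, hx, fun h => hy (h₁.symm.trans (h.trans h₂))⟩
  · rintro ⟨g, x₁, x₂, hx, hy⟩
    exact ⟨g, x₁, x₂, _, _, ⟨hx, hy⟩, rfl, rfl⟩

end Satisfaction

section Chains

lemma transGen_of_chain {α : Type*} {R : α → α → Prop} {X : ℕ → α} {k : ℕ}
    (h : ∀ i ≤ k, R (X i) (X (i + 1))) : Relation.TransGen R (X 0) (X (k + 1)) := by
  induction k with
  | zero => exact .single (h 0 le_rfl)
  | succ k ih => exact (ih fun i hi => h i (hi.trans k.le_succ)).tail (h (k + 1) le_rfl)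

lemma exists_chain_of_transGen {α : Type*} {R : α → α → Prop} {a b : α}
    (h : Relation.TransGen R a b) :
    ∃ (X : ℕ → α) (k : ℕ), X 0 = a ∧ X (k + 1) = b ∧ ∀ i ≤ k, R (X i) (X (i + 1)) := by
  induction h using Relation.TransGen.head_induction_on with
  | @single c hcb => exact ⟨fun i => if i = 0 then c else b, 0, rfl, rfl, by simpa using hcb⟩
  | @head c d hcd _ ih =>
    obtain ⟨X, k, hX0, hXk, hX⟩ := ih
    refine ⟨fun i => if i = 0 then c else X (i - 1), k + 1, rfl, hXk, fun i hi => ?_⟩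
    rcases i with _ | i
    · simpa [hX0] using hcd
    · simpa using hX i (by omega)

end Chains

section LeadsTo

variable {F : StructFuns S} {X V : S.Var}
  {g : ∀ W : {W : S.Var // W ≠ X ∧ W ≠ V}, S.Val W.val}

lemma ltInt_apply_left (x : S.Val X) : ltInt X V g x X = some x := by
  simp [ltInt]

lemma ltInt_apply_right (hXV : X ≠ V) (x : S.Val X) : ltInt X V g x V = none := by
  simp [ltInt, Ne.symm hXV]

lemma ltInt_apply_of_ne {W : S.Var} (hWX : W ≠ X) (hWV : W ≠ V) (x : S.Val X) :
    ltInt X V g x W = some (g ⟨W, hWX, hWV⟩) := by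
  simp [ltInt, hWX, hWV]

/-- `[Z⃗:=z⃗, X:=x]` fixes every variable but `V`, so the argument it leaves for `F_V` does not
depend on the starting valuation. -/
lemma update_restrict_intVal_ltInt (hF : RecursiveF F) (hXV : X ≠ V) (A A' : Env S)
    (x x' : S.Val X) :
    Function.update ((intVal F A (ltInt X V g x)).restrict V) ⟨X, hXV⟩ x' =
      (intVal F A' (ltInt X V g x')).restrict V := by
  funext w
  rcases eq_or_ne w ⟨X, hXV⟩ with rfl | hw
  · rw [Function.update_self]
    exact (hF.intVal_apply_of_some A' (ltInt_apply_left x')).symm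
  · have hwX : w.val ≠ X := fun h => hw (Subtype.ext h)
    rw [Function.update_of_ne hw]
    exact (hF.intVal_apply_of_some A (ltInt_apply_of_ne hwX w.prop x)).trans
      (hF.intVal_apply_of_some A' (ltInt_apply_of_ne hwX w.prop x')).symm

lemma RecursiveF.dirAff_of_satW_leadsTo (hF : RecursiveF F) {T : Set (Env S)} {A : Env S}
    (hXV : X ≠ V) (h : SatW (leadsTo X V) F T A) : DirAff F X V := by
  obtain ⟨g, x₁, x₂, hx, hne⟩ := satW_leadsTo.1 h
  have hV : ¬ S.exo V := fun hV => hne <| by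
    rw [hF.intVal_apply_of_exo A hV (ltInt_apply_right hXV x₁),
      hF.intVal_apply_of_exo A hV (ltInt_apply_right hXV x₂)]
  have hF_apply : ∀ x, intVal F A (ltInt X V g x) V =
      F V ((intVal F A (ltInt X V g x)).restrict V) :=
    fun x => by simp [hF.intVal_apply A _ V, hV, ltInt_apply_right hXV x]
  refine ⟨hV, hXV, (intVal F A (ltInt X V g x₁)).restrict V, x₁, x₂, hx, ?_⟩
  rwa [update_restrict_intVal_ltInt hF hXV A A, update_restrict_intVal_ltInt hF hXV A A,
    ← hF_apply, ← hF_apply]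

end LeadsTo

section Soundness

variable {F : StructFuns S} {T : Set (Env S)} {A : Env S}

lemma RecursiveF.satW_int_int (hF : RecursiveF F) {I J : Intervention S} {φ : Form S} :
    SatW (Form.int I (Form.int J φ)) F T A ↔ SatW (Form.int (icomp I J) φ) F T A := by
  simp only [SatW, intF_icomp, hF.image_intVal_icomp, hF.intVal_icomp]

lemma RecursiveF.not_satW_leadsTo_of_chain (hF : RecursiveF F) {X : ℕ → S.Var} {k : ℕ}
    (hadj : ∀ i ≤ k, X i ≠ X (i + 1)) (hlast : X (k + 1) ≠ X 0)
    (hchain : SatW (chainConj X k) F T A) : ¬ SatW (leadsTo (X (k + 1)) (X 0)) F T A :=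
  fun h => hF _ _
    (transGen_of_chain fun i hi =>
      hF.dirAff_of_satW_leadsTo (hadj i hi) (satW_chainConj.1 hchain i hi))
    (.single (hF.dirAff_of_satW_leadsTo hlast h))

lemma satW_int_know {I : Intervention S} {φ : Form S} :
    SatW (Form.int I (Form.know φ)) F T A ↔ SatW (Form.know (Form.int I φ)) F T A :=
  Set.forall_mem_image

lemma RecursiveF.satW_int_of_isSome_iff (hF : RecursiveF F) {I : Intervention S} {Y : S.Var}
    (hY : ¬ S.exo Y) (hI : ∀ W, (I W).isSome ↔ W ≠ Y) (B : Env S) {y : S.Val Y}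
    (h : SatW (Form.int I (Form.eq Y y)) F T A) : SatW (Form.int I (Form.eq Y y)) F T B := by
  have hexo : ∀ X, S.exo X → (I X).isSome := fun X hX => (hI X).2 fun h => hY (h ▸ hX)
  change intVal F B I Y = y
  rwa [hF.intVal_congr_of_exo_isSome hexo B A]

lemma satW_ann_know {α φ : Form S} :
    SatW (Form.ann α (Form.know φ)) F T A ↔
      SatW (Form.impl α (Form.know (Form.impl α (Form.ann α φ)))) F T A := by
  simp only [satW_impl, SatW]
  exact ⟨fun h hα B hB hαB _ => h hα B ⟨hB, hαB⟩, fun h hα B hB => h hα B hB.1 hB.2 hB.2⟩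

lemma satW_ann_ann {α β φ : Form S} :
    SatW (Form.ann α (Form.ann β φ)) F T A ↔
      SatW (Form.ann (Form.conj α (Form.ann α β)) φ) F T A := by
  have hT : {B | B ∈ T ∧ SatW (Form.conj α (Form.ann α β)) F T B} =
      {B | B ∈ {C | C ∈ T ∧ SatW α F T C} ∧ SatW β F {C | C ∈ T ∧ SatW α F T C} B} := by
    ext B
    simp only [Set.mem_ofPred_eq, SatW]
    tauto
  simp only [SatW] at hT ⊢
  rw [hT]
  tauto

lemma satW_ann_congr {α β φ : Form S} (h : ∀ B ∈ T, (SatW α F T B ↔ SatW β F T B))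
    (hA : A ∈ T) : SatW (Form.ann α φ) F T A ↔ SatW (Form.ann β φ) F T A := by
  have hT : {B | B ∈ T ∧ SatW α F T B} = {B | B ∈ T ∧ SatW β F T B} :=
    Set.ext fun B => and_congr_right fun hB => h B hB
  simp only [SatW, hT, h A hA]

lemma satW_int_ann {I : Intervention S} {α φ : Form S} :
    SatW (Form.int I (Form.ann α φ)) F T A ↔
      SatW (Form.ann (Form.int I α) (Form.int I φ)) F T A := by
  have hT : (fun B => intVal F B I) '' {B | B ∈ T ∧ SatW (Form.int I α) F T B} =
      {C | C ∈ (fun B => intVal F B I) '' T ∧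
        SatW α (intF F I) ((fun B => intVal F B I) '' T) C} := by
    ext C
    constructor
    · rintro ⟨B, ⟨hB, hα⟩, rfl⟩
      exact ⟨⟨B, hB, rfl⟩, hα⟩
    · rintro ⟨⟨B, hB, rfl⟩, hα⟩
      exact ⟨B, ⟨hB, hα⟩, rfl⟩
  simp only [SatW] at hT ⊢
  rw [hT]

theorem ThmPAKC.sound {φ : Form S} (h : ThmPAKC φ) (hF : RecursiveF F)
    (hC : ∀ B ∈ T, Complies F B) (hA : A ∈ T) : SatW φ F T A := by
  induction h generalizing F T A with
  | taut ht => exact satW_of_tauto ht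
  | mp _ _ ih₁ ih₂ => exact satW_impl.1 (ih₁ hF hC hA) (ih₂ hF hC hA)
  | a1 I Y y y' hy => exact satW_impl.2 fun h h' => hy (h.symm.trans h')
  | a2 I Y => exact satW_bigOr.2 ⟨_, List.mem_map.2 ⟨intVal F A I Y, by simp, rfl⟩, rfl⟩
  | a3 I Y Z y z =>
    exact satW_impl.2 fun ⟨hy, hz⟩ => by simpa [SatW, hF.intVal_iUpd_of_eq hy] using hz
  | a4 I Y y => exact hF.intVal_apply_of_some A (iUpd_self I Y y)
  | a5 I Y Z y z hYZ =>
    exact satW_impl.2 fun ⟨hz, hy⟩ => by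
      simpa [SatW, hF.intVal_eq_intVal_iUpd_of_reversible hYZ hz hy] using hz
  | a6 X k hadj hlast => exact satW_impl.2 (hF.not_satW_leadsTo_of_chain hadj hlast)
  | a7 I U u hU hIU =>
    have hempty : iEmpty S U = none := rfl
    exact satW_iffF.2 <| by
      simp [SatW, hF.intVal_apply_of_exo A hU hIU, hF.intVal_apply_of_exo A hU hempty]
  | aEmpty Y y => exact satW_iffF.2 <| by simp [SatW, hF.intVal_iEmpty (hC A hA)]
  | aNeg I φ => exact satW_iffF.2 Iff.rfl
  | aConj I φ ψ => exact satW_iffF.2 Iff.rfl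
  | aIntInt I J φ => exact satW_iffF.2 hF.satW_int_int
  | axK φ ψ => exact satW_impl.2 fun h => satW_impl.2 fun h' B hB => satW_impl.1 (h B hB) (h' B hB)
  | necK _ ih => exact fun B hB => ih hF hC hB
  | axT φ => exact satW_impl.2 fun h => h A hA
  | ax4 φ => exact satW_impl.2 fun h _ _ => h
  | ax5 φ => exact satW_impl.2 fun h _ _ => h
  | cm I φ => exact satW_iffF.2 satW_int_know
  | kl I Y y hY hI => exact satW_impl.2 fun h B _ => hF.satW_int_of_isSome_iff hY hI B h
  | necInt I _ ih =>
    exact ih (recursiveF_intF hF I) (Set.forall_mem_image.2 fun B _ => hF.complies_intVal B I)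
      (Set.mem_image_of_mem _ hA)
  | annEq α I Y y => exact satW_iffF.2 <| by rw [satW_impl]; exact Iff.rfl
  | annNeg α φ => exact satW_iffF.2 <| by simp only [satW_impl, SatW]; tauto
  | annConj α φ ψ => exact satW_iffF.2 <| by simp only [SatW]; tauto
  | annKnow α φ => exact satW_iffF.2 satW_ann_know
  | annAnn α β φ => exact satW_iffF.2 satW_ann_ann
  | kAnn α φ ψ => exact satW_impl.2 fun h => satW_impl.2 fun h' hα => satW_impl.1 (h hα) (h' hα)
  | necAnn α _ ih => exact fun hα => ih hF (fun B hB => hC B hB.1) ⟨hA, hα⟩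
  | reAnn φ _ ih => exact satW_iffF.2 <| satW_ann_congr (fun B hB => satW_iffF.1 (ih hF hC hB)) hA
  | intAnn I α φ => exact satW_iffF.2 satW_int_ann

def Entails (Γ : Set (Form S)) (χ : Form S) : Prop :=
  ∀ (F : StructFuns S) (T : Set (Env S)) (A : Env S),
    RecursiveF F → T.Nonempty → (∀ B ∈ T, Complies F B) → A ∈ T →
    (∀ ψ ∈ Γ, SatW ψ F T A) → SatW χ F T A

theorem ProvPAKC.sound {Γ : Set (Form S)} {χ : Form S} (h : ProvPAKC Γ χ) : Entails Γ χ :=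
  fun _ _ _ hF _ hC hA hΓ =>
    let ⟨_, hl, hthm⟩ := h
    satW_impsFrom.1 (hthm.sound hF hC hA) fun ψ hψ => hΓ ψ (hl ψ hψ)

end Soundness

section Derivability

namespace ThmPAKC

lemma of_tauto {φ : Form S} (ht : ∀ v, IsBoolVal v → v φ = true) : ThmPAKC φ :=
  taut (tauto_iff.2 ht)

lemma mp_of_tauto {φ ψ : Form S} (ht : ∀ v, IsBoolVal v → v φ = true → v ψ = true)
    (h : ThmPAKC φ) : ThmPAKC ψ :=
  (of_tauto fun v hv => (hv.impl_eq_true φ ψ).2 (ht v hv)).mp h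

lemma mp₂_of_tauto {φ₁ φ₂ ψ : Form S}
    (ht : ∀ v, IsBoolVal v → v φ₁ = true → v φ₂ = true → v ψ = true)
    (h₁ : ThmPAKC φ₁) (h₂ : ThmPAKC φ₂) : ThmPAKC ψ :=
  ((of_tauto fun v hv => by simpa only [hv.impl_eq_true] using ht v hv).mp h₁).mp h₂

variable {a b c d : Form S}

lemma iff_mp (h : ThmPAKC (Form.iffF a b)) : ThmPAKC (Form.impl a b) :=
  mp_of_tauto (fun v hv h => by simp_all [hv.iffF_eq_true, hv.impl_eq_true]) h

lemma iff_mpr (h : ThmPAKC (Form.iffF a b)) : ThmPAKC (Form.impl b a) :=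
  mp_of_tauto (fun v hv h => by simp_all [hv.iffF_eq_true, hv.impl_eq_true]) h

lemma iff_intro (h₁ : ThmPAKC (Form.impl a b)) (h₂ : ThmPAKC (Form.impl b a)) :
    ThmPAKC (Form.iffF a b) :=
  mp₂_of_tauto (fun v hv h h' => by simp only [hv.iffF_eq_true, hv.impl_eq_true] at *; tauto)
    h₁ h₂

lemma iff_refl (a : Form S) : ThmPAKC (Form.iffF a a) :=
  of_tauto fun v hv => by simp [hv.iffF_eq_true]

lemma iff_trans (h₁ : ThmPAKC (Form.iffF a b)) (h₂ : ThmPAKC (Form.iffF b c)) :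
    ThmPAKC (Form.iffF a c) :=
  mp₂_of_tauto (fun v hv h h' => by simp only [hv.iffF_eq_true] at *; tauto) h₁ h₂

lemma neg_congr (h : ThmPAKC (Form.iffF a b)) : ThmPAKC (Form.iffF (Form.neg a) (Form.neg b)) :=
  mp_of_tauto (fun v hv h => by simp only [hv.iffF_eq_true, hv.neg_eq_true] at *; tauto) h

lemma conj_congr (h₁ : ThmPAKC (Form.iffF a b)) (h₂ : ThmPAKC (Form.iffF c d)) :
    ThmPAKC (Form.iffF (Form.conj a c) (Form.conj b d)) :=
  mp₂_of_tauto (fun v hv h h' => by simp only [hv.iffF_eq_true, hv.conj_eq_true] at *; tauto)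
    h₁ h₂

lemma impl_congr (h₁ : ThmPAKC (Form.iffF a b)) (h₂ : ThmPAKC (Form.iffF c d)) :
    ThmPAKC (Form.iffF (Form.impl a c) (Form.impl b d)) :=
  neg_congr (conj_congr h₁ (neg_congr h₂))

lemma know_mono (h : ThmPAKC (Form.impl a b)) :
    ThmPAKC (Form.impl (Form.know a) (Form.know b)) :=
  (axK a b).mp (necK h)

lemma know_congr (h : ThmPAKC (Form.iffF a b)) :
    ThmPAKC (Form.iffF (Form.know a) (Form.know b)) :=
  iff_intro (know_mono (iff_mp h)) (know_mono (iff_mpr h))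

lemma int_impl (I : Intervention S) (a b : Form S) :
    ThmPAKC (Form.iffF (Form.int I (Form.impl a b)) (Form.impl (Form.int I a) (Form.int I b))) :=
  iff_trans (aNeg I _) <| neg_congr <| iff_trans (aConj I _ _) <|
    conj_congr (iff_refl _) (aNeg I b)

lemma int_mono (I : Intervention S) (h : ThmPAKC (Form.impl a b)) :
    ThmPAKC (Form.impl (Form.int I a) (Form.int I b)) :=
  (iff_mp (int_impl I a b)).mp (necInt I h)

lemma int_congr (I : Intervention S) (h : ThmPAKC (Form.iffF a b)) :
    ThmPAKC (Form.iffF (Form.int I a) (Form.int I b)) :=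
  iff_intro (int_mono I (iff_mp h)) (int_mono I (iff_mpr h))

lemma ann_mono (α : Form S) (h : ThmPAKC (Form.impl a b)) :
    ThmPAKC (Form.impl (Form.ann α a) (Form.ann α b)) :=
  (kAnn α a b).mp (necAnn α h)

lemma ann_congr (α : Form S) (h : ThmPAKC (Form.iffF a b)) :
    ThmPAKC (Form.iffF (Form.ann α a) (Form.ann α b)) :=
  iff_intro (ann_mono α (iff_mp h)) (ann_mono α (iff_mpr h))

lemma know_impsFrom (l : List (Form S)) (φ : Form S) :
    ThmPAKC (Form.impl (Form.know (impsFrom l φ)) (impsFrom (l.map Form.know) (Form.know φ))) := by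
  induction l with
  | nil => exact of_tauto fun v hv => by simp [impsFrom, hv.impl_eq_true]
  | cons ψ l ih =>
    refine mp₂_of_tauto (fun v hv h h' => ?_) (axK ψ (impsFrom l φ)) ih
    simp only [impsFrom, List.map_cons, hv.impl_eq_true] at h h' ⊢
    tauto

end ThmPAKC

namespace ProvPAKC

variable {Γ : Set (Form S)}

lemma of_thm {φ : Form S} (h : ThmPAKC φ) : ProvPAKC Γ φ :=
  ⟨[], by simp, h⟩

lemma of_mem {φ : Form S} (h : φ ∈ Γ) : ProvPAKC Γ φ :=
  ⟨[φ], by simpa using h, ThmPAKC.of_tauto fun v hv => by simp [impsFrom, hv.impl_eq_true]⟩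

lemma mp {φ ψ : Form S} (h₁ : ProvPAKC Γ (Form.impl φ ψ)) (h₂ : ProvPAKC Γ φ) :
    ProvPAKC Γ ψ := by
  obtain ⟨l₁, hl₁, ht₁⟩ := h₁
  obtain ⟨l₂, hl₂, ht₂⟩ := h₂
  refine ⟨l₁ ++ l₂, fun χ hχ => (List.mem_append.1 hχ).elim (hl₁ χ) (hl₂ χ),
    ThmPAKC.mp₂_of_tauto (fun v hv h h' => ?_) ht₁ ht₂⟩
  simp only [hv.impsFrom_eq_true, hv.impl_eq_true, List.mem_append] at h h' ⊢
  exact fun hl => h (fun χ hχ => hl χ (.inl hχ)) (h' fun χ hχ => hl χ (.inr hχ))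

lemma mp_of_tauto {φ ψ : Form S} (ht : ∀ v, IsBoolVal v → v φ = true → v ψ = true)
    (h : ProvPAKC Γ φ) : ProvPAKC Γ ψ :=
  (of_thm (ThmPAKC.of_tauto fun v hv => (hv.impl_eq_true φ ψ).2 (ht v hv))).mp h

lemma mp₂_of_tauto {φ₁ φ₂ ψ : Form S}
    (ht : ∀ v, IsBoolVal v → v φ₁ = true → v φ₂ = true → v ψ = true)
    (h₁ : ProvPAKC Γ φ₁) (h₂ : ProvPAKC Γ φ₂) : ProvPAKC Γ ψ :=
  ((of_thm (ThmPAKC.of_tauto fun v hv => by simpa only [hv.impl_eq_true] using ht v hv)).mp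
    h₁).mp h₂

lemma impl_of_insert {φ ψ : Form S} (h : ProvPAKC (insert φ Γ) ψ) :
    ProvPAKC Γ (Form.impl φ ψ) := by
  obtain ⟨l, hl, ht⟩ := h
  refine ⟨l.filter (· ≠ φ), fun χ hχ => ?_, ThmPAKC.mp_of_tauto (fun v hv h => ?_) ht⟩
  · simp only [List.mem_filter, decide_eq_true_iff] at hχ
    exact (hl χ hχ.1).resolve_left hχ.2
  · simp only [hv.impsFrom_eq_true, hv.impl_eq_true, List.mem_filter, decide_eq_true_iff] at h ⊢
    refine fun hl' hφ => h fun χ hχ => ?_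
    by_cases hχφ : χ = φ
    · exact hχφ ▸ hφ
    · exact hl' χ ⟨hχ, hχφ⟩

end ProvPAKC

end Derivability

section MaximalConsistentSets

def Consistent (Γ : Set (Form S)) : Prop := ¬ ProvPAKC Γ (botF S)

lemma consistent_insert_neg {Γ : Set (Form S)} {χ : Form S} (h : ¬ ProvPAKC Γ χ) :
    Consistent (insert (Form.neg χ) Γ) := fun hbot =>
  h <| hbot.impl_of_insert.mp_of_tauto fun v hv h' => by
    have := hv.botF_ne_true
    simp only [hv.impl_eq_true, hv.neg_eq_true] at h'
    tauto

lemma Consistent.insert_or_insert_neg {Γ : Set (Form S)} (h : Consistent Γ) (φ : Form S) :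
    Consistent (insert φ Γ) ∨ Consistent (insert (Form.neg φ) Γ) := by
  by_contra hcon
  simp only [not_or, Consistent, not_not] at hcon
  refine h <| ProvPAKC.mp₂_of_tauto (fun v hv h₁ h₂ => ?_) hcon.1.impl_of_insert
    hcon.2.impl_of_insert
  simp only [hv.impl_eq_true, hv.neg_eq_true] at h₁ h₂
  tauto

lemma consistent_sUnion {c : Set (Set (Form S))} (hc : ∀ Θ ∈ c, Consistent Θ)
    (hchain : IsChain (· ⊆ ·) c) (hne : c.Nonempty) : Consistent (⋃₀ c) := by
  rintro ⟨l, hl, ht⟩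
  obtain ⟨Θ, hΘ, hlΘ⟩ :=
    hchain.directedOn.exists_mem_subset_of_finite_of_subset_sUnion hne l.finite_toSet hl
  exact hc Θ hΘ ⟨l, fun ψ hψ => hlΘ hψ, ht⟩

def MCS (D : Set (Form S)) : Prop := Consistent D ∧ ∀ φ : Form S, φ ∈ D ∨ Form.neg φ ∈ D

lemma Consistent.exists_mcs_superset {Γ : Set (Form S)} (h : Consistent Γ) :
    ∃ D, Γ ⊆ D ∧ MCS D := by
  obtain ⟨D, hΓD, hD⟩ := zorn_subset_nonempty {Θ | Consistent Θ}
    (fun c hc hchain hne => ⟨⋃₀ c, consistent_sUnion hc hchain hne,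
      fun _ => Set.subset_sUnion_of_mem⟩) Γ h
  refine ⟨D, hΓD, hD.prop, fun φ => ?_⟩
  exact (hD.prop.insert_or_insert_neg φ).imp
    (fun hφ => hD.eq_of_subset hφ (Set.subset_insert _ _) ▸ Set.mem_insert _ _)
    (fun hφ => hD.eq_of_subset hφ (Set.subset_insert _ _) ▸ Set.mem_insert _ _)

namespace MCS

variable {D : Set (Form S)} (hD : MCS D)
include hD

lemma mem_of_prov {φ : Form S} (h : ProvPAKC D φ) : φ ∈ D :=
  (hD.2 φ).resolve_right fun hneg => hD.1 <|
    ProvPAKC.mp₂_of_tauto (fun v hv h₁ h₂ => by simp_all [hv.neg_eq_true]) h (.of_mem hneg)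

lemma mem_of_thm {φ : Form S} (h : ThmPAKC φ) : φ ∈ D :=
  hD.mem_of_prov (.of_thm h)

lemma neg_mem_iff {φ : Form S} : Form.neg φ ∈ D ↔ φ ∉ D :=
  ⟨fun hneg hφ => hD.1 <| ProvPAKC.mp₂_of_tauto (fun v hv h₁ h₂ => by simp_all [hv.neg_eq_true])
    (.of_mem hφ) (.of_mem hneg), (hD.2 φ).resolve_left⟩

lemma conj_mem_iff {φ ψ : Form S} : Form.conj φ ψ ∈ D ↔ φ ∈ D ∧ ψ ∈ D := by
  refine ⟨fun h => ⟨?_, ?_⟩, fun ⟨hφ, hψ⟩ => ?_⟩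
  · exact hD.mem_of_prov <| ProvPAKC.mp_of_tauto
      (fun v hv h => ((hv.conj_eq_true φ ψ).1 h).1) (.of_mem h)
  · exact hD.mem_of_prov <| ProvPAKC.mp_of_tauto
      (fun v hv h => ((hv.conj_eq_true φ ψ).1 h).2) (.of_mem h)
  · exact hD.mem_of_prov <| ProvPAKC.mp₂_of_tauto
      (fun v hv h h' => (hv.conj_eq_true φ ψ).2 ⟨h, h'⟩) (.of_mem hφ) (.of_mem hψ)

lemma isBoolVal : IsBoolVal fun φ => decide (φ ∈ D) :=
  ⟨fun φ => by by_cases h : φ ∈ D <;> simp [hD.neg_mem_iff, h],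
    fun φ ψ => by by_cases h : φ ∈ D <;> simp [hD.conj_mem_iff, h]⟩

lemma mem_mp {φ ψ : Form S} (h : Form.impl φ ψ ∈ D) (hφ : φ ∈ D) : ψ ∈ D := by
  simpa using ((hD.isBoolVal.impl_eq_true φ ψ).1 (by simpa using h)) (by simpa using hφ)

lemma mem_iff_of_thm {φ ψ : Form S} (h : ThmPAKC (Form.iffF φ ψ)) : φ ∈ D ↔ ψ ∈ D := by
  simpa using (hD.isBoolVal.iffF_eq_true φ ψ).1 (by simpa using hD.mem_of_thm h)

lemma bigOr_mem_iff {l : List (Form S)} : bigOr l ∈ D ↔ ∃ ψ ∈ l, ψ ∈ D := by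
  simpa using hD.isBoolVal.bigOr_eq_true l

lemma chainConj_mem_iff {X : ℕ → S.Var} {k : ℕ} :
    chainConj X k ∈ D ↔ ∀ i ≤ k, leadsTo (X i) (X (i + 1)) ∈ D := by
  simpa using hD.isBoolVal.chainConj_eq_true X k

lemma leadsTo_mem_iff {X V : S.Var} :
    leadsTo X V ∈ D ↔
      ∃ g x₁ x₂ y₁ y₂, (x₁ ≠ x₂ ∧ y₁ ≠ y₂) ∧
        Form.int (ltInt X V g x₁) (Form.eq V y₁) ∈ D ∧
        Form.int (ltInt X V g x₂) (Form.eq V y₂) ∈ D := by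
  simpa using hD.isBoolVal.leadsTo_eq_true X V

lemma exists_mcs_of_neg_know {φ : Form S} (h : Form.neg (Form.know φ) ∈ D) :
    ∃ D', MCS D' ∧ Form.neg φ ∈ D' ∧ ∀ χ, Form.know χ ∈ D ↔ Form.know χ ∈ D' := by
  have hcon : Consistent (insert (Form.neg φ) {ψ | Form.know ψ ∈ D}) := by
    refine consistent_insert_neg fun ⟨l, hl, ht⟩ => hD.neg_mem_iff.1 h <| hD.mem_of_prov
      ⟨l.map Form.know, fun ψ hψ => ?_, (ThmPAKC.know_impsFrom l φ).mp (.necK ht)⟩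
    obtain ⟨χ, hχ, rfl⟩ := List.mem_map.1 hψ
    exact hl χ hχ
  obtain ⟨D', hsub, hD'⟩ := hcon.exists_mcs_superset
  refine ⟨D', hD', hsub (Set.mem_insert _ _), fun χ => ⟨fun hχ => ?_, fun hχ => ?_⟩⟩
  · exact hsub (Set.mem_insert_of_mem _ (hD.mem_mp (hD.mem_of_thm (.ax4 χ)) hχ))
  · by_contra hnχ
    have h5 := hD.mem_mp (hD.mem_of_thm (.ax5 χ)) (hD.neg_mem_iff.2 hnχ)
    exact hD'.neg_mem_iff.1 (hsub (Set.mem_insert_of_mem _ h5)) hχ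

end MCS

end MaximalConsistentSets

section BasicFormulas

inductive IsBasic : Form S → Prop
  | intEq (I : Intervention S) (Y : S.Var) (y : S.Val Y) : IsBasic (Form.int I (Form.eq Y y))
  | neg {φ : Form S} : IsBasic φ → IsBasic (Form.neg φ)
  | conj {φ ψ : Form S} : IsBasic φ → IsBasic ψ → IsBasic (Form.conj φ ψ)
  | know {φ : Form S} : IsBasic φ → IsBasic (Form.know φ)

lemma IsBasic.impl {φ ψ : Form S} (hφ : IsBasic φ) (hψ : IsBasic ψ) :
    IsBasic (Form.impl φ ψ) :=
  .neg (.conj hφ (.neg hψ))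

lemma IsBasic.exists_int_iffF {ψ : Form S} (h : IsBasic ψ) (I : Intervention S) :
    ∃ χ, IsBasic χ ∧ ThmPAKC (Form.iffF (Form.int I ψ) χ) := by
  induction h with
  | intEq J Y y => exact ⟨_, .intEq (icomp I J) Y y, .aIntInt I J _⟩
  | neg _ ih =>
    obtain ⟨χ, hχ, hiff⟩ := ih
    exact ⟨_, hχ.neg, (ThmPAKC.aNeg I _).iff_trans hiff.neg_congr⟩
  | conj _ _ ih₁ ih₂ =>
    obtain ⟨χ₁, hχ₁, hiff₁⟩ := ih₁
    obtain ⟨χ₂, hχ₂, hiff₂⟩ := ih₂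
    exact ⟨_, hχ₁.conj hχ₂, (ThmPAKC.aConj I _ _).iff_trans (hiff₁.conj_congr hiff₂)⟩
  | know _ ih =>
    obtain ⟨χ, hχ, hiff⟩ := ih
    exact ⟨_, hχ.know, (ThmPAKC.cm I _).iff_trans hiff.know_congr⟩

lemma IsBasic.exists_ann_iffF {α ψ : Form S} (hα : IsBasic α) (h : IsBasic ψ) :
    ∃ χ, IsBasic χ ∧ ThmPAKC (Form.iffF (Form.ann α ψ) χ) := by
  induction h with
  | intEq J Y y => exact ⟨_, hα.impl (.intEq J Y y), .annEq α J Y y⟩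
  | neg _ ih =>
    obtain ⟨χ, hχ, hiff⟩ := ih
    exact ⟨_, hα.impl hχ.neg,
      (ThmPAKC.annNeg α _).iff_trans ((ThmPAKC.iff_refl α).impl_congr hiff.neg_congr)⟩
  | conj _ _ ih₁ ih₂ =>
    obtain ⟨χ₁, hχ₁, hiff₁⟩ := ih₁
    obtain ⟨χ₂, hχ₂, hiff₂⟩ := ih₂
    exact ⟨_, hχ₁.conj hχ₂, (ThmPAKC.annConj α _ _).iff_trans (hiff₁.conj_congr hiff₂)⟩
  | know _ ih =>
    obtain ⟨χ, hχ, hiff⟩ := ih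
    exact ⟨_, hα.impl (hα.impl hχ).know, (ThmPAKC.annKnow α _).iff_trans
      ((ThmPAKC.iff_refl α).impl_congr ((ThmPAKC.iff_refl α).impl_congr hiff).know_congr)⟩

lemma exists_isBasic_iffF (φ : Form S) : ∃ χ, IsBasic χ ∧ ThmPAKC (Form.iffF φ χ) := by
  induction φ with
  | eq Y y => exact ⟨_, .intEq (iEmpty S) Y y, .aEmpty Y y⟩
  | neg φ ih =>
    obtain ⟨χ, hχ, hiff⟩ := ih
    exact ⟨_, hχ.neg, hiff.neg_congr⟩
  | conj φ ψ ih₁ ih₂ =>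
    obtain ⟨χ₁, hχ₁, hiff₁⟩ := ih₁
    obtain ⟨χ₂, hχ₂, hiff₂⟩ := ih₂
    exact ⟨_, hχ₁.conj hχ₂, hiff₁.conj_congr hiff₂⟩
  | know φ ih =>
    obtain ⟨χ, hχ, hiff⟩ := ih
    exact ⟨_, hχ.know, hiff.know_congr⟩
  | ann α φ ihα ihφ =>
    obtain ⟨α', hα', hiffα⟩ := ihα
    obtain ⟨φ', hφ', hiffφ⟩ := ihφ
    obtain ⟨χ, hχ, hiff⟩ := hα'.exists_ann_iffF hφ'
    exact ⟨χ, hχ, (ThmPAKC.reAnn φ hiffα).iff_trans ((ThmPAKC.ann_congr α' hiffφ).iff_trans hiff)⟩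
  | int I φ ih =>
    obtain ⟨φ', hφ', hiffφ⟩ := ih
    obtain ⟨χ, hχ, hiff⟩ := hφ'.exists_int_iffF I
    exact ⟨χ, hχ, (ThmPAKC.int_congr I hiffφ).iff_trans hiff⟩

end BasicFormulas

section CanonicalModel

/-- The valuation that `D` assigns to the intervention `I`: `Y ↦ y` where `[I]Y=y ∈ D`. -/
noncomputable def mcsVal (D : Set (Form S)) (I : Intervention S) : Env S :=
  fun Y => Classical.epsilon fun y => Form.int I (Form.eq Y y) ∈ D

def fullInt (V : S.Var) (g : Others S V) : Intervention S :=
  fun W => if h : W = V then none else some (g ⟨W, h⟩)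

namespace MCS

variable {D : Set (Form S)} (hD : MCS D)
include hD

lemma int_eq_mem_iff {I : Intervention S} {Y : S.Var} {y : S.Val Y} :
    Form.int I (Form.eq Y y) ∈ D ↔ mcsVal D I Y = y := by
  have hex : ∃ y, Form.int I (Form.eq Y y) ∈ D := by
    obtain ⟨_, hψ, hmem⟩ := hD.bigOr_mem_iff.1 (hD.mem_of_thm (.a2 I Y))
    obtain ⟨y, -, rfl⟩ := List.mem_map.1 hψ
    exact ⟨y, hmem⟩
  have hval : Form.int I (Form.eq Y (mcsVal D I Y)) ∈ D := Classical.epsilon_spec hex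
  refine ⟨fun h => by_contra fun hne => ?_, fun h => h ▸ hval⟩
  exact hD.neg_mem_iff.1 (hD.mem_mp (hD.mem_of_thm (.a1 I Y _ _ hne)) hval) h

lemma mcsVal_apply_of_some {I : Intervention S} {X : S.Var} {x : S.Val X} (h : I X = some x) :
    mcsVal D I X = x := by
  have h4 := hD.mem_of_thm (.a4 I X x)
  rwa [iUpd, Function.update_eq_self_iff.2 h.symm, hD.int_eq_mem_iff] at h4

lemma mcsVal_apply_of_exo {I : Intervention S} {X : S.Var} (hX : S.exo X) (h : I X = none) :
    mcsVal D I X = mcsVal D (iEmpty S) X := by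
  rw [← hD.int_eq_mem_iff, ← hD.mem_iff_of_thm (.a7 I X _ hX h), hD.int_eq_mem_iff]

lemma mcsVal_iUpd (I : Intervention S) (Y : S.Var) :
    mcsVal D (iUpd I Y (mcsVal D I Y)) = mcsVal D I := by
  funext Z
  rw [← hD.int_eq_mem_iff]
  exact hD.mem_mp (hD.mem_of_thm (.a3 I Y Z _ _))
    (hD.conj_mem_iff.2 ⟨hD.int_eq_mem_iff.2 rfl, hD.int_eq_mem_iff.2 rfl⟩)

lemma mcsVal_eq_of_forall_eq_or_eq_some {I J : Intervention S}
    (h : ∀ W, J W = I W ∨ J W = some (mcsVal D I W)) : mcsVal D J = mcsVal D I := by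
  suffices key : ∀ (s : Finset S.Var) (J : Intervention S), (∀ W ∉ s, J W = I W) →
      (∀ W ∈ s, J W = some (mcsVal D I W)) → mcsVal D J = mcsVal D I by
    refine key (Finset.univ.filter fun W => J W ≠ I W) J (fun W hW => ?_) (fun W hW => ?_)
    · simpa using hW
    · exact (h W).resolve_left (Finset.mem_filter.1 hW).2
  intro s
  induction s using Finset.induction_on with
  | empty => exact fun J hJ _ => congrArg _ (funext fun W => hJ W (Finset.notMem_empty W))
  | insert a s ha ih =>
    intro J hout hin
    have hJ' : mcsVal D (Function.update J a (I a)) = mcsVal D I := ih _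
      (fun W hW => by
        by_cases hWa : W = a
        · subst hWa; exact Function.update_self ..
        · rw [Function.update_of_ne hWa]; exact hout W (by simp [hWa, hW]))
      (fun W hW => by
        rw [Function.update_of_ne (fun h : W = a => ha (h ▸ hW))]
        exact hin W (Finset.mem_insert_of_mem hW))
    have hJ : J = iUpd (Function.update J a (I a)) a (mcsVal D (Function.update J a (I a)) a) := by
      rw [hJ', iUpd, Function.update_idem, ← hin a (Finset.mem_insert_self a s),
        Function.update_eq_self]
    rw [hJ, hD.mcsVal_iUpd, hJ']

lemma mcsVal_fullInt {I : Intervention S} {V : S.Var} (h : I V = none) :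
    mcsVal D (fullInt V ((mcsVal D I).restrict V)) = mcsVal D I :=
  hD.mcsVal_eq_of_forall_eq_or_eq_some fun W => by
    by_cases hW : W = V
    · subst hW; simp [fullInt, h]
    · simp [fullInt, hW, Env.restrict]

end MCS

variable {D₀ : Set (Form S)}

def canWorlds (D₀ : Set (Form S)) : Set (Set (Form S)) :=
  {D | MCS D ∧ ∀ φ, Form.know φ ∈ D ↔ Form.know φ ∈ D₀}

noncomputable def canF (D₀ : Set (Form S)) : StructFuns S :=
  fun V g => mcsVal D₀ (fullInt V g) V

def canT (D₀ : Set (Form S)) : Set (Env S) :=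
  (fun D => mcsVal D (iEmpty S)) '' canWorlds D₀

lemma MCS.mem_canWorlds (hD₀ : MCS D₀) : D₀ ∈ canWorlds D₀ :=
  ⟨hD₀, fun _ => Iff.rfl⟩

lemma canF_eq_mcsVal (hD₀ : MCS D₀) {D : Set (Form S)} (hD : D ∈ canWorlds D₀) {V : S.Var}
    (hV : ¬ S.exo V) (g : Others S V) : canF D₀ V g = mcsVal D (fullInt V g) V := by
  have hfull : ∀ W, (fullInt V g W).isSome ↔ W ≠ V := fun W => by
    by_cases hW : W = V <;> simp [fullInt, hW]
  have hK := hD.1.mem_mp (hD.1.mem_of_thm (.kl _ V _ hV hfull)) (hD.1.int_eq_mem_iff.2 rfl)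
  exact hD₀.int_eq_mem_iff.1 (hD₀.mem_mp (hD₀.mem_of_thm (.axT _)) ((hD.2 _).1 hK))

lemma ltInt_eq_fullInt {X V : S.Var} (hXV : X ≠ V) (g : Others S V) (x : S.Val X) :
    ltInt X V (fun w => g ⟨w, w.prop.2⟩) x = fullInt V (Function.update g ⟨X, hXV⟩ x) := by
  funext W
  by_cases hWX : W = X
  · subst hWX; simp [ltInt, fullInt, hXV]
  · by_cases hWV : W = V
    · subst hWV; simp [ltInt, fullInt, hWX]
    · simp [ltInt, fullInt, hWX, hWV]

lemma MCS.leadsTo_mem_of_dirAff (hD₀ : MCS D₀) {X V : S.Var} (h : DirAff (canF D₀) X V) :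
    leadsTo X V ∈ D₀ := by
  obtain ⟨-, hXV, g, x₁, x₂, hx, hne⟩ := h
  refine hD₀.leadsTo_mem_iff.2 ⟨fun w => g ⟨w, w.prop.2⟩, x₁, x₂, _, _, ⟨hx, hne⟩, ?_, ?_⟩ <;>
    rw [ltInt_eq_fullInt hXV, hD₀.int_eq_mem_iff] <;> rfl

lemma MCS.recursiveF_canF (hD₀ : MCS D₀) : RecursiveF (canF D₀) := by
  intro a b hab hba
  obtain ⟨X, k, h0, hk, hX⟩ := exists_chain_of_transGen (hab.trans hba)
  cases k with
  | zero => exact (hX 0 le_rfl).ne (h0.trans hk.symm)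
  | succ k =>
    have hlast : DirAff (canF D₀) (X (k + 1)) (X 0) := by
      simpa [hk, h0] using hX (k + 1) le_rfl
    have hchain : chainConj X k ∈ D₀ := hD₀.chainConj_mem_iff.2 fun i hi =>
      hD₀.leadsTo_mem_of_dirAff (hX i (hi.trans k.le_succ))
    have hA6 := hD₀.mem_mp (hD₀.mem_of_thm
      (.a6 X k (fun i hi => (hX i (hi.trans k.le_succ)).ne) hlast.ne)) hchain
    exact hD₀.neg_mem_iff.1 hA6 (hD₀.leadsTo_mem_of_dirAff hlast)

lemma MCS.intVal_canF (hD₀ : MCS D₀) {D : Set (Form S)} (hD : D ∈ canWorlds D₀)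
    (I : Intervention S) : intVal (canF D₀) (mcsVal D (iEmpty S)) I = mcsVal D I :=
  hD₀.recursiveF_canF.intVal_eq <| intervenedVal_iff.2 fun X => by
    cases hI : I X with
    | some x => exact hD.1.mcsVal_apply_of_some hI
    | none =>
      by_cases hX : S.exo X
      · simpa [hX] using hD.1.mcsVal_apply_of_exo hX hI
      · simp only [hX, if_false, Option.getD_none, canF_eq_mcsVal hD₀ hD hX,
          hD.1.mcsVal_fullInt hI]

lemma MCS.complies_canT (hD₀ : MCS D₀) : ∀ B ∈ canT D₀, Complies (canF D₀) B := by
  rintro _ ⟨D, hD, rfl⟩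
  simpa [hD₀.intVal_canF hD, intF_iEmpty] using
    hD₀.recursiveF_canF.complies_intVal (mcsVal D (iEmpty S)) (iEmpty S)

lemma MCS.mem_iff_satW_canT_of_isBasic (hD₀ : MCS D₀) {φ : Form S} (hφ : IsBasic φ)
    {D : Set (Form S)} (hD : D ∈ canWorlds D₀) :
    φ ∈ D ↔ SatW φ (canF D₀) (canT D₀) (mcsVal D (iEmpty S)) := by
  induction hφ generalizing D with
  | intEq I Y y =>
    change _ ↔ intVal _ _ I Y = y
    rw [hD₀.intVal_canF hD, hD.1.int_eq_mem_iff]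
  | neg _ ih => rw [hD.1.neg_mem_iff, ih hD]; rfl
  | conj _ _ ih₁ ih₂ => rw [hD.1.conj_mem_iff, ih₁ hD, ih₂ hD]; rfl
  | @know φ _ ih =>
    refine ⟨?_, fun h => by_contra fun hK => ?_⟩
    · rintro hK _ ⟨D', hD', rfl⟩
      exact (ih hD').1 (hD'.1.mem_mp (hD'.1.mem_of_thm (.axT φ)) ((hD'.2 φ).2 ((hD.2 φ).1 hK)))
    · obtain ⟨D', hD', hneg, hsame⟩ := hD.1.exists_mcs_of_neg_know (hD.1.neg_mem_iff.2 hK)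
      have hD'W : D' ∈ canWorlds D₀ := ⟨hD', fun χ => (hsame χ).symm.trans (hD.2 χ)⟩
      exact hD'.neg_mem_iff.1 hneg ((ih hD'W).2 (h _ ⟨D', hD'W, rfl⟩))

lemma MCS.mcsVal_mem_canT (hD₀ : MCS D₀) : mcsVal D₀ (iEmpty S) ∈ canT D₀ :=
  ⟨D₀, hD₀.mem_canWorlds, rfl⟩

lemma MCS.mem_iff_satW_canT (hD₀ : MCS D₀) (φ : Form S) :
    φ ∈ D₀ ↔ SatW φ (canF D₀) (canT D₀) (mcsVal D₀ (iEmpty S)) := by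
  obtain ⟨χ, hχ, hiff⟩ := exists_isBasic_iffF φ
  rw [hD₀.mem_iff_of_thm hiff, hD₀.mem_iff_satW_canT_of_isBasic hχ hD₀.mem_canWorlds,
    ← satW_iffF.1 (hiff.sound hD₀.recursiveF_canF hD₀.complies_canT hD₀.mcsVal_mem_canT)]

theorem ProvPAKC.of_entails {Γ : Set (Form S)} {χ : Form S} (h : Entails Γ χ) :
    ProvPAKC Γ χ := by
  by_contra hnot
  obtain ⟨D₀, hsub, hD₀⟩ := (consistent_insert_neg hnot).exists_mcs_superset
  have hΓ : ∀ ψ ∈ Γ, SatW ψ (canF D₀) (canT D₀) (mcsVal D₀ (iEmpty S)) := fun ψ hψ =>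
    (hD₀.mem_iff_satW_canT ψ).1 (hsub (Set.mem_insert_of_mem _ hψ))
  have hχ := h _ _ _ hD₀.recursiveF_canF ⟨_, hD₀.mcsVal_mem_canT⟩ hD₀.complies_canT
    hD₀.mcsVal_mem_canT hΓ
  exact hD₀.neg_mem_iff.1 (hsub (Set.mem_insert _ _)) ((hD₀.mem_iff_satW_canT χ).2 hχ)

end CanonicalModel

/-- Theorem: the proof system L_PAKC is sound and strongly complete for the
language L_PAKC with respect to epistemic (recursive) causal models. -/
theorem LPAKC_sound_and_strongly_complete (S : Sig) (Γ : Set (Form S)) (χ : Form S) :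
    ProvPAKC Γ χ ↔
      (∀ (F : StructFuns S) (T : Set (Env S)) (A : Env S),
        RecursiveF F → T.Nonempty → (∀ B ∈ T, Complies F B) → A ∈ T →
        (∀ ψ ∈ Γ, SatW ψ F T A) → SatW χ F T A) :=
  ⟨ProvPAKC.sound, ProvPAKC.of_entails⟩
end

section
/- The translation tr₄ from L′_PAKC to L′_KC, defined by the clauses tr₄([X⃗:=x⃗]Y=y) = [X⃗:=x⃗]Y=y; tr₄(¬θ) = ¬tr₄(θ); tr₄(θ₁∧θ₂) = tr₄(θ₁)∧tr₄(θ₂); tr₄(Kθ) = K tr₄(θ); tr₄([α!][X⃗:=x⃗]Y=y) = tr₄(α → [X⃗:=x⃗]Y=y); tr₄([α!]¬θ) = tr₄(α → ¬[α!]θ); tr₄([α!](θ₁∧θ₂)) = tr₄([α!]θ₁ ∧ [α!]θ₂); tr₄([α!]Kθ) = tr₄(α → K(α → [α!]θ)); tr₄([α₁!][α₂!]θ) = tr₄([α₁ ∧ [α₁!]α₂ !]θ), is well defined and satisfies, for every L′_PAKC formula θ: (1) tr₄(θ) ∈ L′_KC; (2) θ ↔ tr₄(θ) is provable in the system L_PAKC;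 (3) θ ↔ tr₄(θ) is valid over epistemic recursive causal models. -/
open Classical

variable {S : Sig}

/-- The language L′_PAKC: formulas generated from `[X⃗:=x⃗]Y=y` by `¬`, `∧`, `K`
and announcement operators. -/
inductive IsPAKC' : Form S → Prop where
  | intEq : ∀ (I : Intervention S) (Y : S.Var) (y : S.Val Y),
      IsPAKC' (Form.int I (Form.eq Y y))
  | neg : ∀ {φ : Form S}, IsPAKC' φ → IsPAKC' (Form.neg φ)
  | conj : ∀ {φ ψ : Form S}, IsPAKC' φ → IsPAKC' ψ → IsPAKC' (Form.conj φ ψ)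
  | know : ∀ {φ : Form S}, IsPAKC' φ → IsPAKC' (Form.know φ)
  | ann : ∀ {α φ : Form S}, IsPAKC' α → IsPAKC' φ → IsPAKC' (Form.ann α φ)

/-- The language L′_KC: formulas generated from `[X⃗:=x⃗]Y=y` by `¬`, `∧` and `K`. -/
inductive IsKC' : Form S → Prop where
  | intEq : ∀ (I : Intervention S) (Y : S.Var) (y : S.Val Y),
      IsKC' (Form.int I (Form.eq Y y))
  | neg : ∀ {φ : Form S}, IsKC' φ → IsKC' (Form.neg φ)
  | conj : ∀ {φ ψ : Form S}, IsKC' φ → IsKC' ψ → IsKC' (Form.conj φ ψ)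
  | know : ∀ {φ : Form S}, IsKC' φ → IsKC' (Form.know φ)

/-- The translation tr₄ from L′_PAKC to L′_KC, given as a relation defined by the
recursive clauses of the definition (the theorem below asserts that it is well
defined on L′_PAKC, i.e. total and functional). -/
inductive Tr4 : Form S → Form S → Prop where
  | intEq : ∀ (I : Intervention S) (Y : S.Var) (y : S.Val Y),
      Tr4 (Form.int I (Form.eq Y y)) (Form.int I (Form.eq Y y))
  | neg : ∀ {θ θ' : Form S}, Tr4 θ θ' → Tr4 (Form.neg θ) (Form.neg θ')
  | conj : ∀ {θ θ' ρ ρ' : Form S}, Tr4 θ θ' → Tr4 ρ ρ' →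
      Tr4 (Form.conj θ ρ) (Form.conj θ' ρ')
  | know : ∀ {θ θ' : Form S}, Tr4 θ θ' → Tr4 (Form.know θ) (Form.know θ')
  | annIntEq : ∀ {α χ : Form S} {I : Intervention S} (Y : S.Var) (y : S.Val Y),
      Tr4 (Form.impl α (Form.int I (Form.eq Y y))) χ →
      Tr4 (Form.ann α (Form.int I (Form.eq Y y))) χ
  | annNeg : ∀ {α θ χ : Form S},
      Tr4 (Form.impl α (Form.neg (Form.ann α θ))) χ →
      Tr4 (Form.ann α (Form.neg θ)) χ
  | annConj : ∀ {α θ ρ χ : Form S},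
      Tr4 (Form.conj (Form.ann α θ) (Form.ann α ρ)) χ →
      Tr4 (Form.ann α (Form.conj θ ρ)) χ
  | annKnow : ∀ {α θ χ : Form S},
      Tr4 (Form.impl α (Form.know (Form.impl α (Form.ann α θ)))) χ →
      Tr4 (Form.ann α (Form.know θ)) χ
  | annAnn : ∀ {α β θ χ : Form S},
      Tr4 (Form.ann (Form.conj α (Form.ann α β)) θ) χ →
      Tr4 (Form.ann α (Form.ann β θ)) χ

section Tr4Aux

variable {S : Sig}

/-! ### Derived propositional rules of L_PAKC -/

private lemma thmIffRefl (φ : Form S) : ThmPAKC (Form.iffF φ φ) := by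
  apply ThmPAKC.taut
  intro v hn hc
  simp only [Form.iffF, Form.impl, hn, hc]
  cases v φ <;> simp

private lemma thmMp2 {φ ψ χ : Form S} (h : ThmPAKC (Form.impl φ (Form.impl ψ χ)))
    (h1 : ThmPAKC φ) (h2 : ThmPAKC ψ) : ThmPAKC χ :=
  ThmPAKC.mp (ThmPAKC.mp h h1) h2

private lemma thmImpOfIff1 {φ ψ : Form S} (h : ThmPAKC (Form.iffF φ ψ)) :
    ThmPAKC (Form.impl φ ψ) := by
  refine ThmPAKC.mp (ThmPAKC.taut ?_) h
  intro v hn hc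
  simp only [Form.iffF, Form.impl, hn, hc]
  cases v φ <;> cases v ψ <;> simp

private lemma thmImpOfIff2 {φ ψ : Form S} (h : ThmPAKC (Form.iffF φ ψ)) :
    ThmPAKC (Form.impl ψ φ) := by
  refine ThmPAKC.mp (ThmPAKC.taut ?_) h
  intro v hn hc
  simp only [Form.iffF, Form.impl, hn, hc]
  cases v φ <;> cases v ψ <;> simp

private lemma thmIffOfImp {φ ψ : Form S} (h1 : ThmPAKC (Form.impl φ ψ))
    (h2 : ThmPAKC (Form.impl ψ φ)) : ThmPAKC (Form.iffF φ ψ) := by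
  refine thmMp2 (ThmPAKC.taut ?_) h1 h2
  intro v hn hc
  simp only [Form.iffF, Form.impl, hn, hc]
  cases v φ <;> cases v ψ <;> simp

private lemma thmIffTrans {φ ψ χ : Form S} (h1 : ThmPAKC (Form.iffF φ ψ))
    (h2 : ThmPAKC (Form.iffF ψ χ)) : ThmPAKC (Form.iffF φ χ) := by
  refine thmMp2 (ThmPAKC.taut ?_) h1 h2
  intro v hn hc
  simp only [Form.iffF, Form.impl, hn, hc]
  cases v φ <;> cases v ψ <;> cases v χ <;> simp

private lemma thmNegCongr {φ ψ : Form S} (h : ThmPAKC (Form.iffF φ ψ)) :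
    ThmPAKC (Form.iffF (Form.neg φ) (Form.neg ψ)) := by
  refine ThmPAKC.mp (ThmPAKC.taut ?_) h
  intro v hn hc
  simp only [Form.iffF, Form.impl, hn, hc]
  cases v φ <;> cases v ψ <;> simp

private lemma thmConjCongr {φ φ' ψ ψ' : Form S} (h1 : ThmPAKC (Form.iffF φ φ'))
    (h2 : ThmPAKC (Form.iffF ψ ψ')) :
    ThmPAKC (Form.iffF (Form.conj φ ψ) (Form.conj φ' ψ')) := by
  refine thmMp2 (ThmPAKC.taut ?_) h1 h2
  intro v hn hc
  simp only [Form.iffF, Form.impl, hn, hc]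
  cases v φ <;> cases v ψ <;> cases v φ' <;> cases v ψ' <;> simp

private lemma thmKImp {φ ψ : Form S} (h : ThmPAKC (Form.impl φ ψ)) :
    ThmPAKC (Form.impl (Form.know φ) (Form.know ψ)) :=
  ThmPAKC.mp (ThmPAKC.axK φ ψ) (ThmPAKC.necK h)

private lemma thmKnowCongr {φ ψ : Form S} (h : ThmPAKC (Form.iffF φ ψ)) :
    ThmPAKC (Form.iffF (Form.know φ) (Form.know ψ)) :=
  thmIffOfImp (thmKImp (thmImpOfIff1 h)) (thmKImp (thmImpOfIff2 h))

/-! ### Properties of Tr4 -/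

private lemma tr4_kc {θ θ' : Form S} (h : Tr4 θ θ') : IsKC' θ' := by
  induction h with
  | intEq I Y y => exact IsKC'.intEq I Y y
  | neg _ ih => exact IsKC'.neg ih
  | conj _ _ ih1 ih2 => exact IsKC'.conj ih1 ih2
  | know _ ih => exact IsKC'.know ih
  | annIntEq _ _ _ ih => exact ih
  | annNeg _ ih => exact ih
  | annConj _ ih => exact ih
  | annKnow _ ih => exact ih
  | annAnn _ ih => exact ih

private lemma tr4_thm {θ θ' : Form S} (h : Tr4 θ θ') : ThmPAKC (Form.iffF θ θ') := by
  induction h with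
  | intEq I Y y => exact thmIffRefl _
  | neg _ ih => exact thmNegCongr ih
  | conj _ _ ih1 ih2 => exact thmConjCongr ih1 ih2
  | know _ ih => exact thmKnowCongr ih
  | annIntEq Y y _ ih => exact thmIffTrans (ThmPAKC.annEq _ _ Y y) ih
  | annNeg _ ih => exact thmIffTrans (ThmPAKC.annNeg _ _) ih
  | annConj _ ih => exact thmIffTrans (ThmPAKC.annConj _ _ _) ih
  | annKnow _ ih => exact thmIffTrans (ThmPAKC.annKnow _ _) ih
  | annAnn _ ih => exact thmIffTrans (ThmPAKC.annAnn _ _ _) ih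

private lemma tr4_sat {θ θ' : Form S} (h : Tr4 θ θ') :
    ∀ (F : StructFuns S) (T : Set (Env S)) (A : Env S), SatW θ F T A ↔ SatW θ' F T A := by
  induction h with
  | intEq I Y y => intro F T A; rfl
  | neg _ ih => intro F T A; simp only [SatW]; rw [ih]
  | conj _ _ ih1 ih2 => intro F T A; simp only [SatW]; rw [ih1, ih2]
  | know _ ih =>
      intro F T A
      simp only [SatW]
      exact forall_congr' fun B => imp_congr Iff.rfl (ih F T B)
  | annIntEq Y y _ ih =>
      intro F T A
      rw [← ih F T A]
      simp only [SatW, Form.impl]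
      tauto
  | annNeg _ ih =>
      intro F T A
      rw [← ih F T A]
      simp only [SatW, Form.impl]
      tauto
  | annConj _ ih =>
      intro F T A
      rw [← ih F T A]
      simp only [SatW, Form.impl]
      tauto
  | annKnow _ ih =>
      intro F T A
      rw [← ih F T A]
      simp only [SatW, Form.impl, Set.mem_setOf_eq]
      constructor
      · intro h
        intro hcon
        obtain ⟨ha, hb⟩ := hcon
        apply hb
        intro B hB
        intro hcon2
        obtain ⟨haB, hnb⟩ := hcon2
        exact hnb fun _ => h ha B ⟨hB, haB⟩
      · intro h ha B hB
        by_contra hcon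
        apply h
        refine ⟨ha, fun hk => ?_⟩
        have := hk B hB.1
        apply this
        exact ⟨hB.2, fun h2 => hcon (h2 hB.2)⟩
  | annAnn _ ih =>
      rename_i α β θ₀ χ₀ htr
      intro F T A
      rw [← ih F T A]
      simp only [SatW, Set.mem_setOf_eq]
      have hset : {B | B ∈ T ∧ SatW α F T B ∧ (SatW α F T B →
            SatW β F {C | C ∈ T ∧ SatW α F T C} B)} =
          {B | (B ∈ T ∧ SatW α F T B) ∧ SatW β F {C | C ∈ T ∧ SatW α F T C} B} := by
        ext C
        simp only [Set.mem_setOf_eq]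
        tauto
      rw [hset]
      tauto

end Tr4Aux

section Tr4Exist

variable {S : Sig}

/-- Complexity measure for the translation. -/
private def meas : Form S → ℕ
  | Form.eq _ _ => 1
  | Form.neg φ => meas φ + 1
  | Form.conj φ ψ => meas φ + meas ψ + 1
  | Form.know φ => meas φ + 1
  | Form.int _ φ => meas φ + 1
  | Form.ann α φ => (8 + 2 * meas α) * meas φ

private lemma one_le_meas (φ : Form S) : 1 ≤ meas φ := by
  induction φ with
  | eq Y y => simp [meas]
  | neg φ ih => simp [meas]
  | conj φ ψ ih1 ih2 => simp [meas]
  | know φ ih => simp [meas]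
  | int I φ ih => simp [meas]
  | ann α φ ih1 ih2 =>
      calc 1 = 1 * 1 := by ring
      _ ≤ (8 + 2 * meas α) * meas φ := Nat.mul_le_mul (by omega) ih2
      _ = meas (Form.ann α φ) := rfl

private lemma meas_impl (φ ψ : Form S) :
    meas (Form.impl φ ψ) = meas φ + meas ψ + 3 := by
  simp [Form.impl, meas]; ring

private lemma tr4_exists_aux : ∀ (n : ℕ) (θ : Form S), meas θ ≤ n → IsPAKC' θ →
    ∃ θ', Tr4 θ θ' := by
  intro n
  induction n with
  | zero => intro θ hm _; have := one_le_meas θ; omega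
  | succ n ih =>
      intro θ hm hθ
      cases hθ with
      | intEq I Y y => exact ⟨_, Tr4.intEq I Y y⟩
      | neg hφ =>
          rename_i φ
          obtain ⟨χ, hχ⟩ := ih φ (by simp [meas] at hm; omega) hφ
          exact ⟨_, Tr4.neg hχ⟩
      | conj hφ hψ =>
          rename_i φ ψ
          obtain ⟨χ1, hχ1⟩ := ih φ (by simp [meas] at hm; omega) hφ
          obtain ⟨χ2, hχ2⟩ := ih ψ (by simp [meas] at hm; omega) hψ
          exact ⟨_, Tr4.conj hχ1 hχ2⟩
      | know hφ =>
          rename_i φ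
          obtain ⟨χ, hχ⟩ := ih φ (by simp [meas] at hm; omega) hφ
          exact ⟨_, Tr4.know hχ⟩
      | ann hα hφ =>
          rename_i α φ
          have hα1 := one_le_meas α
          cases hφ with
          | intEq I Y y =>
              have hm' : meas (Form.impl α (Form.int I (Form.eq Y y))) ≤ n := by
                rw [meas_impl]
                simp only [meas] at hm ⊢
                omega
              obtain ⟨χ, hχ⟩ := ih _ hm' (IsPAKC'.neg (IsPAKC'.conj hα
                (IsPAKC'.neg (IsPAKC'.intEq I Y y))))
              exact ⟨_, Tr4.annIntEq Y y hχ⟩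
          | neg hψ =>
              rename_i ψ
              have hψ1 := one_le_meas ψ
              have hm' : meas (Form.impl α (Form.neg (Form.ann α ψ))) ≤ n := by
                rw [meas_impl]
                simp only [meas] at hm ⊢
                nlinarith
              obtain ⟨χ, hχ⟩ := ih _ hm' (IsPAKC'.neg (IsPAKC'.conj hα
                (IsPAKC'.neg (IsPAKC'.neg (IsPAKC'.ann hα hψ)))))
              exact ⟨_, Tr4.annNeg hχ⟩
          | conj hψ1' hψ2' =>
              rename_i ψ1 ψ2
              have h1 := one_le_meas ψ1
              have h2 := one_le_meas ψ2
              have hm' : meas (Form.conj (Form.ann α ψ1) (Form.ann α ψ2)) ≤ n := by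
                simp only [meas] at hm ⊢
                nlinarith
              obtain ⟨χ, hχ⟩ := ih _ hm'
                (IsPAKC'.conj (IsPAKC'.ann hα hψ1') (IsPAKC'.ann hα hψ2'))
              exact ⟨_, Tr4.annConj hχ⟩
          | know hψ =>
              rename_i ψ
              have h1 := one_le_meas ψ
              have hm' : meas (Form.impl α (Form.know (Form.impl α (Form.ann α ψ)))) ≤ n := by
                rw [meas_impl]
                simp only [meas, meas_impl] at hm ⊢
                nlinarith
              obtain ⟨χ, hχ⟩ := ih _ hm' (IsPAKC'.neg (IsPAKC'.conj hα (IsPAKC'.neg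
                (IsPAKC'.know (IsPAKC'.neg (IsPAKC'.conj hα
                  (IsPAKC'.neg (IsPAKC'.ann hα hψ))))))))
              exact ⟨_, Tr4.annKnow hχ⟩
          | ann hβ hψ =>
              rename_i β ψ
              have h1 := one_le_meas β
              have h2 := one_le_meas ψ
              have hm' : meas (Form.ann (Form.conj α (Form.ann α β)) ψ) ≤ n := by
                simp only [meas] at hm ⊢
                nlinarith
              obtain ⟨χ, hχ⟩ := ih _ hm'
                (IsPAKC'.ann (IsPAKC'.conj hα (IsPAKC'.ann hα hβ)) hψ)
              exact ⟨_, Tr4.annAnn hχ⟩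

private lemma tr4_func {θ θ₁ : Form S} (h1 : Tr4 θ θ₁) :
    ∀ {θ₂ : Form S}, Tr4 θ θ₂ → θ₁ = θ₂ := by
  induction h1 with
  | intEq I Y y => intro θ₂ h2; cases h2; rfl
  | neg _ ih => intro θ₂ h2; cases h2 with | neg h' => rw [ih h']
  | conj _ _ ih1 ih2 => intro θ₂ h2; cases h2 with | conj h1' h2' => rw [ih1 h1', ih2 h2']
  | know _ ih => intro θ₂ h2; cases h2 with | know h' => rw [ih h']
  | annIntEq Y y _ ih => intro θ₂ h2; cases h2 with | annIntEq Y' y' h' => exact ih h'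
  | annNeg _ ih => intro θ₂ h2; cases h2 with | annNeg h' => exact ih h'
  | annConj _ ih => intro θ₂ h2; cases h2 with | annConj h' => exact ih h'
  | annKnow _ ih => intro θ₂ h2; cases h2 with | annKnow h' => exact ih h'
  | annAnn _ ih => intro θ₂ h2; cases h2 with | annAnn h' => exact ih h'

end Tr4Exist

/-- Theorem: the translation tr₄ is well defined on L′_PAKC (it assigns to each
L′_PAKC formula a unique translation) and, for every L′_PAKC formula `θ`:
(1) `tr₄(θ)` is an L′_KC formula; (2) `θ ↔ tr₄(θ)` is provable in the system
L_PAKC; (3) `θ ↔ tr₄(θ)` is valid over epistemic (recursive) causal models. -/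
theorem tr4_well_defined_and_correct (S : Sig) (θ : Form S) (hθ : IsPAKC' θ) :
    (∃! θ' : Form S, Tr4 θ θ') ∧
      ∀ θ' : Form S, Tr4 θ θ' →
        IsKC' θ' ∧
        ThmPAKC (Form.iffF θ θ') ∧
        ∀ (F : StructFuns S) (T : Set (Env S)) (A : Env S),
          RecursiveF F → T.Nonempty → (∀ B ∈ T, Complies F B) → A ∈ T →
          (SatW θ F T A ↔ SatW θ' F T A) := by
  constructor
  · obtain ⟨θ', hθ'⟩ := tr4_exists_aux (meas θ) θ le_rfl hθ
    exact ⟨θ', hθ', fun y hy => tr4_func hy hθ'⟩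
  · intro θ' hθ'
    exact ⟨tr4_kc hθ', tr4_thm hθ', fun F T A _ _ _ _ => tr4_sat hθ' F T A⟩
end
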